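/- arXiv:1902.02458 — 9 statements merged into one kernel-verified Lean document; each statement's English description precedes it below -/
import Mathlib

section
/- Let X be a locally compact Hausdorff space and let λ be a set function from the compact subsets of X to [-∞,∞] that assumes at most one of the values ∞, -∞, is not identically ∞ or -∞, and is finitely additive on compact sets (λ(C ⊔ K) = λ(C) + λ(K) whenever C, K are disjoint compact sets). Then the positive variation λ⁺ and the total variation |λ| are finitely additive on open sets: for any disjoint open sets U₁, U₂ ⊆ X, λ⁺(U₁ ⊔ U₂) = λ⁺(U₁) + λ⁺(U₂) and |λ|(U₁ ⊔ U₂) = |λ|(U₁) + |λ|(U₂). -/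
open Set Classical

variable {X : Type*}

/-- The positive variation on an open set: `λ⁺(U) = sup{λ(K) : K ⊆ U, K compact}`. -/
noncomputable def posVarOpen [TopologicalSpace X] (lam : Set X → EReal) (U : Set X) : EReal :=
  ⨆ (K : Set X) (_ : IsCompact K ∧ K ⊆ U), lam K

/-- The positive variation: the sup formula on open sets, and
`λ⁺(F) = inf{λ⁺(U) : F ⊆ U, U open}` on other (in particular closed) sets. -/
noncomputable def posVar [TopologicalSpace X] (lam : Set X → EReal) (A : Set X) : EReal :=
  if IsOpen A then posVarOpen lam A
  else ⨅ (U : Set X) (_ : IsOpen U ∧ A ⊆ U), posVarOpen lam U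

/-- The total variation on an open set:
`|λ|(U) = sup{∑ᵢ |λ(Kᵢ)| : K₁, …, Kₙ pairwise disjoint compact subsets of U}`. -/
noncomputable def totVarOpen [TopologicalSpace X] (lam : Set X → EReal) (U : Set X) : EReal :=
  ⨆ (n : ℕ) (K : Fin n → Set X)
    (_ : (∀ i, IsCompact (K i) ∧ K i ⊆ U) ∧ Pairwise (Function.onFun Disjoint K)),
      ∑ i, max (lam (K i)) (-(lam (K i)))

/-- The total variation: the sup formula on open sets, and
`|λ|(F) = inf{|λ|(U) : F ⊆ U, U open}` on other (in particular closed) sets. -/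
noncomputable def totVar [TopologicalSpace X] (lam : Set X → EReal) (A : Set X) : EReal :=
  if IsOpen A then totVarOpen lam A
  else ⨅ (U : Set X) (_ : IsOpen U ∧ A ⊆ U), totVarOpen lam U


section AuxVar
variable [TopologicalSpace X] {lam : Set X → EReal} {U V : Set X}

private lemma posVarOpen_mono (h : U ⊆ V) : posVarOpen lam U ≤ posVarOpen lam V :=
  iSup₂_le fun K hK => le_iSup₂_of_le K ⟨hK.1, hK.2.trans h⟩ le_rfl

private lemma totVarOpen_mono (h : U ⊆ V) : totVarOpen lam U ≤ totVarOpen lam V :=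
  iSup_le fun n => iSup₂_le fun K hK =>
    le_iSup_of_le n (le_iSup₂_of_le K ⟨fun i => ⟨(hK.1 i).1, (hK.1 i).2.trans h⟩, hK.2⟩ le_rfl)

private lemma posVarOpen_nonneg (h0 : lam ∅ = 0) : 0 ≤ posVarOpen lam U := by
  have := le_iSup₂ (f := fun (K : Set X) (_ : IsCompact K ∧ K ⊆ U) => lam K)
    ∅ ⟨isCompact_empty, empty_subset U⟩
  rwa [h0] at this

private lemma absE_nonneg (x : EReal) : 0 ≤ max x (-x) := by
  rcases le_total x 0 with h | h
  · exact le_max_of_le_right (by rw [show (0:EReal) = -0 by simp]; exact EReal.neg_le_neg_iff.2 h)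
  · exact le_max_of_le_left h

private lemma totVarOpen_nonneg : 0 ≤ totVarOpen lam U := by
  refine le_trans (le_of_eq ?_)
    (le_iSup_of_le 0 (le_iSup₂_of_le Fin.elim0
      ⟨fun i => i.elim0, fun i => i.elim0⟩ le_rfl))
  simp

private lemma absE_add_le {a b : EReal} (h : (a ≠ ⊤ ∧ b ≠ ⊤) ∨ (a ≠ ⊥ ∧ b ≠ ⊥)) :
    max (a + b) (-(a + b)) ≤ max a (-a) + max b (-b) := by
  have hneg : -(a + b) = -a + -b := EReal.neg_add (by tauto) (by tauto)
  refine max_le (add_le_add (le_max_left _ _) (le_max_left _ _)) ?_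
  rw [hneg]
  exact add_le_add (le_max_right _ _) (le_max_right _ _)

end AuxVar

/-- Lemma 2.2 (s4): for a signed set function `λ` on compact subsets of a locally compact
Hausdorff space, assuming at most one of `∞, -∞`, not identically `∞` or `-∞`, and finitely
additive on compact sets, the positive variation `λ⁺` and the total variation `|λ|` are
finitely additive on disjoint open sets. -/
theorem posVar_totVar_finitely_additive_on_open
    [TopologicalSpace X] [LocallyCompactSpace X] [T2Space X]
    (lam : Set X → EReal)
    (hadd : ∀ C K : Set X, IsCompact C → IsCompact K → Disjoint C K →
      lam (C ∪ K) = lam C + lam K)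
    (hone : (∀ K : Set X, IsCompact K → lam K ≠ ⊤) ∨ (∀ K : Set X, IsCompact K → lam K ≠ ⊥))
    (hne : ∃ K : Set X, IsCompact K ∧ lam K ≠ ⊤ ∧ lam K ≠ ⊥) :
    ∀ U₁ U₂ : Set X, IsOpen U₁ → IsOpen U₂ → Disjoint U₁ U₂ →
      posVar lam (U₁ ∪ U₂) = posVar lam U₁ + posVar lam U₂ ∧
      totVar lam (U₁ ∪ U₂) = totVar lam U₁ + totVar lam U₂ := by
  classical
  obtain ⟨K0, hK0c, hK0t, hK0b⟩ := hne
  have h0 : lam ∅ = 0 := by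
    have h := hadd K0 ∅ hK0c isCompact_empty (disjoint_empty K0)
    rw [union_empty] at h
    obtain ⟨r, hr⟩ := EReal.canLift.prf (lam K0) ⟨hK0t, hK0b⟩
    rw [← hr] at h
    have h1 : lam ∅ + (r : EReal) ≤ 0 + r := by rw [zero_add, add_comm]; exact le_of_eq h.symm
    have h2 : (0 : EReal) + r ≤ lam ∅ + r := by rw [zero_add, add_comm]; exact le_of_eq h
    exact le_antisymm ((EReal.addLECancellable_coe r).add_le_add_iff_right.mp h1)
      ((EReal.addLECancellable_coe r).add_le_add_iff_right.mp h2)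
  intro U₁ U₂ hU₁ hU₂ hdis
  have hU : IsOpen (U₁ ∪ U₂) := hU₁.union hU₂
  have hsplit : ∀ K : Set X, IsCompact K → K ⊆ U₁ ∪ U₂ →
      IsCompact (K ∩ U₁) ∧ IsCompact (K ∩ U₂) ∧ lam K = lam (K ∩ U₁) + lam (K ∩ U₂) := by
    intro K hK hKU
    have e1 : K ∩ U₁ = K \ U₂ := by
      apply subset_antisymm
      · rintro x ⟨hxK, hx1⟩
        exact ⟨hxK, fun hx2 => Set.disjoint_left.mp hdis hx1 hx2⟩
      · rintro x ⟨hxK, hx2⟩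
        exact ⟨hxK, (hKU hxK).resolve_right hx2⟩
    have e2 : K ∩ U₂ = K \ U₁ := by
      apply subset_antisymm
      · rintro x ⟨hxK, hx2⟩
        exact ⟨hxK, fun hx1 => Set.disjoint_left.mp hdis hx1 hx2⟩
      · rintro x ⟨hxK, hx1⟩
        exact ⟨hxK, (hKU hxK).resolve_left hx1⟩
    have c1 : IsCompact (K ∩ U₁) := e1 ▸ hK.diff hU₂
    have c2 : IsCompact (K ∩ U₂) := e2 ▸ hK.diff hU₁
    have hd12 : Disjoint (K ∩ U₁) (K ∩ U₂) :=
      hdis.mono inter_subset_right inter_subset_right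
    refine ⟨c1, c2, ?_⟩
    rw [← hadd _ _ c1 c2 hd12, ← Set.inter_union_distrib_left, Set.inter_eq_left.mpr hKU]
  constructor
  · -- positive variation
    simp only [posVar, if_pos hU, if_pos hU₁, if_pos hU₂]
    set S := posVarOpen lam (U₁ ∪ U₂) with hS
    set S1 := posVarOpen lam U₁ with hS1
    set S2 := posVarOpen lam U₂ with hS2
    have hS1n : 0 ≤ S1 := posVarOpen_nonneg h0
    have hS2n : 0 ≤ S2 := posVarOpen_nonneg h0
    have hS1le : S1 ≤ S := posVarOpen_mono subset_union_left
    have hS2le : S2 ≤ S := posVarOpen_mono subset_union_right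
    have hS1b : S1 ≠ ⊥ := fun h => absurd (h ▸ hS1n) EReal.bot_lt_zero.not_ge
    have hS2b : S2 ≠ ⊥ := fun h => absurd (h ▸ hS2n) EReal.bot_lt_zero.not_ge
    refine le_antisymm ?_ ?_
    · refine iSup₂_le fun K hK => ?_
      obtain ⟨c1, c2, heq⟩ := hsplit K hK.1 hK.2
      rw [heq]
      exact add_le_add (le_iSup₂_of_le (K ∩ U₁) ⟨c1, inter_subset_right⟩ le_rfl)
        (le_iSup₂_of_le (K ∩ U₂) ⟨c2, inter_subset_right⟩ le_rfl)
    · by_cases t2 : S2 = ⊤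
      · rw [t2, EReal.add_top_of_ne_bot hS1b]
        exact t2 ▸ hS2le
      by_cases t1 : S1 = ⊤
      · rw [t1, EReal.top_add_of_ne_bot hS2b]
        exact t1 ▸ hS1le
      rw [← EReal.le_sub_iff_add_le (Or.inl hS2b) (Or.inl t2)]
      refine iSup₂_le fun K1 hK1 => ?_
      rw [EReal.le_sub_iff_add_le (Or.inl hS2b) (Or.inl t2), add_comm]
      rcases eq_or_ne (lam K1) ⊥ with hb | hb
      · rw [hb, EReal.add_bot]; exact bot_le
      have ht : lam K1 ≠ ⊤ := fun h =>
        t1 (top_le_iff.1 (h ▸ le_iSup₂_of_le K1 hK1 le_rfl))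
      rw [← EReal.le_sub_iff_add_le (Or.inl hb) (Or.inl ht)]
      refine iSup₂_le fun K2 hK2 => ?_
      rw [EReal.le_sub_iff_add_le (Or.inl hb) (Or.inl ht)]
      have hd : Disjoint K2 K1 := hdis.symm.mono hK2.2 hK1.2
      calc lam K2 + lam K1 = lam (K2 ∪ K1) := (hadd _ _ hK2.1 hK1.1 hd).symm
        _ ≤ S := le_iSup₂_of_le (K2 ∪ K1)
            ⟨hK2.1.union hK1.1, union_subset (hK2.2.trans subset_union_right)
              (hK1.2.trans subset_union_left)⟩ le_rfl
  · -- total variation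
    simp only [totVar, if_pos hU, if_pos hU₁, if_pos hU₂]
    set T := totVarOpen lam (U₁ ∪ U₂) with hT
    set T1 := totVarOpen lam U₁ with hT1
    set T2 := totVarOpen lam U₂ with hT2
    have hT1n : 0 ≤ T1 := totVarOpen_nonneg
    have hT2n : 0 ≤ T2 := totVarOpen_nonneg
    have hT1le : T1 ≤ T := totVarOpen_mono subset_union_left
    have hT2le : T2 ≤ T := totVarOpen_mono subset_union_right
    have hT1b : T1 ≠ ⊥ := fun h => absurd (h ▸ hT1n) EReal.bot_lt_zero.not_ge
    have hT2b : T2 ≠ ⊥ := fun h => absurd (h ▸ hT2n) EReal.bot_lt_zero.not_ge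
    refine le_antisymm ?_ ?_
    · refine iSup_le fun n => iSup₂_le fun K hK => ?_
      have hsp := fun i => hsplit (K i) (hK.1 i).1 (hK.1 i).2
      calc (∑ i, max (lam (K i)) (-(lam (K i))))
          ≤ ∑ i, (max (lam (K i ∩ U₁)) (-(lam (K i ∩ U₁)))
              + max (lam (K i ∩ U₂)) (-(lam (K i ∩ U₂)))) := by
            refine Finset.sum_le_sum fun i _ => ?_
            rw [(hsp i).2.2]
            refine absE_add_le ?_
            rcases hone with h | h
            · exact Or.inl ⟨h _ (hsp i).1, h _ (hsp i).2.1⟩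
            · exact Or.inr ⟨h _ (hsp i).1, h _ (hsp i).2.1⟩
        _ = (∑ i, max (lam (K i ∩ U₁)) (-(lam (K i ∩ U₁))))
              + ∑ i, max (lam (K i ∩ U₂)) (-(lam (K i ∩ U₂))) := Finset.sum_add_distrib
        _ ≤ T1 + T2 := by
            refine add_le_add ?_ ?_
            · exact le_iSup_of_le n (le_iSup₂_of_le (fun i => K i ∩ U₁)
                ⟨fun i => ⟨(hsp i).1, inter_subset_right⟩,
                  fun i j hij => (hK.2 hij).mono inter_subset_left inter_subset_left⟩ le_rfl)
            · exact le_iSup_of_le n (le_iSup₂_of_le (fun i => K i ∩ U₂)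
                ⟨fun i => ⟨(hsp i).2.1, inter_subset_right⟩,
                  fun i j hij => (hK.2 hij).mono inter_subset_left inter_subset_left⟩ le_rfl)
    · have key : ∀ (n m : ℕ) (K : Fin n → Set X) (L : Fin m → Set X),
          ((∀ i, IsCompact (K i) ∧ K i ⊆ U₁) ∧ Pairwise (Function.onFun Disjoint K)) →
          ((∀ j, IsCompact (L j) ∧ L j ⊆ U₂) ∧ Pairwise (Function.onFun Disjoint L)) →
          (∑ j, max (lam (L j)) (-(lam (L j)))) + ∑ i, max (lam (K i)) (-(lam (K i))) ≤ T := by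
        intro n m K L hK hL
        set M : Fin (m + n) → Set X := Fin.append L K with hM
        have hMc : ∀ i, IsCompact (M i) ∧ M i ⊆ U₁ ∪ U₂ := by
          intro i
          refine Fin.addCases (fun j => ?_) (fun j => ?_) i
          · rw [hM, Fin.append_left]
            exact ⟨(hL.1 j).1, (hL.1 j).2.trans subset_union_right⟩
          · rw [hM, Fin.append_right]
            exact ⟨(hK.1 j).1, (hK.1 j).2.trans subset_union_left⟩
        have hMp : Pairwise (Function.onFun Disjoint M) := by
          intro i j
          refine Fin.addCases (fun i' => ?_) (fun i' => ?_) i <;>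
            refine Fin.addCases (fun j' => ?_) (fun j' => ?_) j <;>
              intro hne <;>
                simp only [Function.onFun, hM, Fin.append_left, Fin.append_right]
          · exact hL.2 fun h => hne (by rw [h])
          · exact hdis.symm.mono (hL.1 i').2 (hK.1 j').2
          · exact hdis.mono (hK.1 i').2 (hL.1 j').2
          · exact hK.2 fun h => hne (by rw [h])
        have hsum : (∑ i, max (lam (M i)) (-(lam (M i))))
            = (∑ j, max (lam (L j)) (-(lam (L j))))
              + ∑ i, max (lam (K i)) (-(lam (K i))) := by
          rw [Fin.sum_univ_add]
          simp only [hM, Fin.append_left, Fin.append_right]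
        rw [← hsum]
        exact le_iSup_of_le (m + n) (le_iSup₂_of_le M ⟨hMc, hMp⟩ le_rfl)
      by_cases t2 : T2 = ⊤
      · rw [t2, EReal.add_top_of_ne_bot hT1b]
        exact t2 ▸ hT2le
      by_cases t1 : T1 = ⊤
      · rw [t1, EReal.top_add_of_ne_bot hT2b]
        exact t1 ▸ hT1le
      rw [← EReal.le_sub_iff_add_le (Or.inl hT2b) (Or.inl t2)]
      refine iSup_le fun n => iSup₂_le fun K hK => ?_
      rw [EReal.le_sub_iff_add_le (Or.inl hT2b) (Or.inl t2), add_comm]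
      have hsn : 0 ≤ ∑ i, max (lam (K i)) (-(lam (K i))) :=
        Finset.sum_nonneg fun i _ => absE_nonneg _
      have hsb : (∑ i, max (lam (K i)) (-(lam (K i)))) ≠ ⊥ :=
        fun h => absurd (h ▸ hsn) EReal.bot_lt_zero.not_ge
      have hst : (∑ i, max (lam (K i)) (-(lam (K i)))) ≠ ⊤ := fun h =>
        t1 (top_le_iff.1 (h ▸ le_iSup_of_le n (le_iSup₂_of_le K hK le_rfl)))
      rw [← EReal.le_sub_iff_add_le (Or.inl hsb) (Or.inl hst)]
      refine iSup_le fun m => iSup₂_le fun L hL => ?_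
      rw [EReal.le_sub_iff_add_le (Or.inl hsb) (Or.inl hst)]
      exact key n m K L hK hL
end

section
/- Let X be a locally compact Hausdorff space and let λ be a set function from the compact subsets of X to [-∞,∞] that assumes at most one of the values ∞, -∞, is not identically ∞ or -∞, and is finitely additive on compact sets. Then the set functions λ⁺, λ⁻ = (−λ)⁺, and |λ| are deficient topological measures on X, and |λ|(A) ≤ λ⁺(A) + λ⁻(A) for every set A that is open or closed. -/
open Set Classical

variable {X : Type*}

/-- The negative variation `λ⁻ = (-λ)⁺`. -/
noncomputable def negVar [TopologicalSpace X] (lam : Set X → EReal) : Set X → EReal :=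
  posVar (fun K => -(lam K))

/-- A deficient topological measure on a locally compact space `X`: a set function on open
and closed subsets of `X` with values in `[0,∞]`, not identically `∞`, finitely additive on
compact sets, inner compact regular on open sets, and outer regular on closed sets.
(Values on sets that are neither open nor closed are irrelevant.) -/
def IsDTME [TopologicalSpace X] (ν : Set X → EReal) : Prop :=
  (∀ A : Set X, IsOpen A ∨ IsClosed A → 0 ≤ ν A) ∧
  (∃ A : Set X, (IsOpen A ∨ IsClosed A) ∧ ν A ≠ ⊤) ∧
  (∀ C K : Set X, IsCompact C → IsCompact K → Disjoint C K → ν (C ∪ K) = ν C + ν K) ∧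
  (∀ U : Set X, IsOpen U → ν U = ⨆ (K : Set X) (_ : IsCompact K ∧ K ⊆ U), ν K) ∧
  (∀ F : Set X, IsClosed F → ν F = ⨅ (U : Set X) (_ : IsOpen U ∧ F ⊆ U), ν U)

/-! Every set function involved is the outer extension `outerExt g` of a function `g` given
on open sets (`posVarOpen λ` or `totVarOpen λ`). Such an extension is outer regular by
construction, and it is additive on disjoint compact sets as soon as `g` is monotone and
additive on disjoint open sets: in a Hausdorff space two disjoint compact sets have disjoint
open neighbourhoods, so their open supersets can be taken disjoint. For `λ⁺` and `|λ|` this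
additivity on open sets comes from splitting a compact subset of `U ⊔ V` into its (compact)
traces on `U` and `V`. Finally `|λ| ≤ λ⁺ + λ⁻` because a disjoint family splits into the sets
where `λ ≥ 0` and those where `λ < 0`, and the unions of the two subfamilies are compact.
Since some `λ(K)` is finite, additivity forces `λ(∅) = 0`; since `λ` omits one of `±∞`, `-λ` is
again additive, so `λ⁻ = (-λ)⁺` is covered by the case of `λ⁺`. -/

namespace EReal

lemma max_neg_nonneg (a : EReal) : 0 ≤ max a (-a) := by
  rcases le_total 0 a with h | h
  · exact le_max_of_le_left h
  · exact le_max_of_le_right (EReal.neg_nonneg.mpr h)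

lemma max_neg_add_le (a b : EReal) :
    max (a + b) (-(a + b)) ≤ max a (-a) + max b (-b) := by
  by_cases ha : a = ⊥ ∨ a = ⊤
  · have htop : max a (-a) = ⊤ := by rcases ha with rfl | rfl <;> simp
    rw [htop, EReal.top_add_of_ne_bot (EReal.bot_lt_zero.trans_le (max_neg_nonneg b)).ne']
    exact le_top
  push Not at ha
  rw [EReal.neg_add (Or.inl ha.1) (Or.inl ha.2), sub_eq_add_neg]
  exact max_le (add_le_add (le_max_left _ _) (le_max_left _ _))
    (add_le_add (le_max_right _ _) (le_max_right _ _))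

lemma iSup_add_iSup_le {ι κ : Sort*} {f : ι → EReal} {g : κ → EReal} {c : EReal}
    (h : ∀ i j, f i + g j ≤ c) : (⨆ i, f i) + (⨆ j, g j) ≤ c := by
  refine EReal.add_le_of_forall_lt fun a ha b hb => ?_
  obtain ⟨i, hi⟩ := lt_iSup_iff.mp ha
  obtain ⟨j, hj⟩ := lt_iSup_iff.mp hb
  exact (add_le_add hi.le hj.le).trans (h i j)

lemma le_iInf_add_iInf {ι κ : Sort*} {f : ι → EReal} {g : κ → EReal} {c : EReal}
    (hf : ∀ i, 0 ≤ f i) (hg : ∀ j, 0 ≤ g j) (h : ∀ i j, c ≤ f i + g j) :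
    c ≤ (⨅ i, f i) + (⨅ j, g j) := by
  have hf' : (⨅ i, f i) ≠ ⊥ := (EReal.bot_lt_zero.trans_le (le_iInf hf)).ne'
  have hg' : (⨅ j, g j) ≠ ⊥ := (EReal.bot_lt_zero.trans_le (le_iInf hg)).ne'
  refine EReal.le_add_of_forall_gt (Or.inl hf') (Or.inr hg') fun a ha b hb => ?_
  obtain ⟨i, hi⟩ := iInf_lt_iff.mp ha
  obtain ⟨j, hj⟩ := iInf_lt_iff.mp hb
  exact (h i j).trans (add_le_add hi.le hj.le)

end EReal

section AdditiveOnCompacts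
variable [TopologicalSpace X] {K U V : Set X}

lemma IsCompact.inter_of_subset_union (hK : IsCompact K) (hKUV : K ⊆ U ∪ V) (hV : IsOpen V)
    (hUV : Disjoint U V) : IsCompact (K ∩ U) := by
  have hKU : K ∩ U = K ∩ Vᶜ := Set.ext fun x => and_congr_right fun hx =>
    ⟨fun hxU hxV => Set.disjoint_left.mp hUV hxU hxV, fun hxV => (hKUV hx).resolve_right hxV⟩
  exact hKU ▸ hK.inter_right hV.isClosed_compl

def IsAdditiveOnCompacts (lam : Set X → EReal) : Prop :=
  ∀ C K : Set X, IsCompact C → IsCompact K → Disjoint C K → lam (C ∪ K) = lam C + lam K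

namespace IsAdditiveOnCompacts
variable {lam : Set X → EReal}

lemma map_empty (hadd : IsAdditiveOnCompacts lam)
    (hne : ∃ K : Set X, IsCompact K ∧ lam K ≠ ⊤ ∧ lam K ≠ ⊥) : lam ∅ = 0 := by
  obtain ⟨K, hK, hKtop, hKbot⟩ := hne
  lift lam K to ℝ using ⟨hKtop, hKbot⟩ with x hx
  have h : (x : EReal) = x + lam ∅ := by
    rw [hx, ← hadd K ∅ hK isCompact_empty (disjoint_empty K), union_empty]
  calc lam ∅ = x + lam ∅ - x := EReal.add_sub_cancel_left.symm
    _ = 0 := by rw [← h, ← EReal.coe_sub, sub_self, EReal.coe_zero]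

lemma neg (hadd : IsAdditiveOnCompacts lam)
    (hone : (∀ K : Set X, IsCompact K → lam K ≠ ⊤) ∨ (∀ K : Set X, IsCompact K → lam K ≠ ⊥)) :
    IsAdditiveOnCompacts (fun K => -lam K) := by
  intro C K hC hK hd
  show -lam (C ∪ K) = -lam C + -lam K
  rw [hadd C K hC hK hd, ← sub_eq_add_neg]
  rcases hone with h | h
  · exact EReal.neg_add (Or.inr (h K hK)) (Or.inl (h C hC))
  · exact EReal.neg_add (Or.inl (h C hC)) (Or.inr (h K hK))

lemma eq_add_inter (hadd : IsAdditiveOnCompacts lam) (hK : IsCompact K) (hKUV : K ⊆ U ∪ V)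
    (hU : IsOpen U) (hV : IsOpen V) (hUV : Disjoint U V) :
    lam K = lam (K ∩ U) + lam (K ∩ V) := by
  rw [← hadd _ _ (hK.inter_of_subset_union hKUV hV hUV)
    (hK.inter_of_subset_union (union_comm U V ▸ hKUV) hU hUV.symm)
    (hUV.mono inter_subset_right inter_subset_right), ← inter_union_distrib_left,
    inter_eq_left.mpr hKUV]

lemma map_biUnion (hadd : IsAdditiveOnCompacts lam) (h0 : lam ∅ = 0) {ι : Type*}
    {K : ι → Set X} (hK : ∀ i, IsCompact (K i)) (hd : Pairwise (Function.onFun Disjoint K))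
    (s : Finset ι) : lam (⋃ i ∈ s, K i) = ∑ i ∈ s, lam (K i) := by
  induction s using Finset.induction_on with
  | empty => simpa using h0
  | insert a s ha ih =>
    rw [Finset.set_biUnion_insert, Finset.sum_insert ha, ← ih,
      hadd _ _ (hK a) (s.isCompact_biUnion fun i _ => hK i)]
    exact Set.disjoint_iUnion₂_right.mpr fun i hi => hd fun h => ha (h ▸ hi)

end IsAdditiveOnCompacts

end AdditiveOnCompacts

noncomputable def outerExt [TopologicalSpace X] (g : Set X → EReal) (A : Set X) : EReal :=
  if IsOpen A then g A else ⨅ (U : Set X) (_ : IsOpen U ∧ A ⊆ U), g U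

section OuterExt
variable [TopologicalSpace X] {g g₁ g₂ : Set X → EReal} {A B C K U : Set X}

lemma outerExt_of_isOpen (hU : IsOpen U) : outerExt g U = g U := if_pos hU

lemma outerExt_eq_iInf (hg : Monotone g) (A : Set X) :
    outerExt g A = ⨅ (U : Set X) (_ : IsOpen U ∧ A ⊆ U), g U := by
  rw [outerExt]
  split_ifs with hA
  · exact le_antisymm (le_iInf₂ fun U hU => hg hU.2) (iInf₂_le A ⟨hA, subset_rfl⟩)
  · rfl

lemma monotone_outerExt (hg : Monotone g) : Monotone (outerExt g) := fun A B hAB => by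
  rw [outerExt_eq_iInf hg, outerExt_eq_iInf hg]
  exact le_iInf₂ fun U hU => iInf₂_le U ⟨hU.1, hAB.trans hU.2⟩

lemma outerExt_nonneg (hg : Monotone g) (h0 : 0 ≤ g ∅) (A : Set X) : 0 ≤ outerExt g A := by
  rw [outerExt_eq_iInf hg]
  exact le_iInf₂ fun U _ => h0.trans (hg (empty_subset U))

lemma outerExt_eq_iInf_outerExt (hg : Monotone g) (A : Set X) :
    outerExt g A = ⨅ (U : Set X) (_ : IsOpen U ∧ A ⊆ U), outerExt g U := by
  rw [outerExt_eq_iInf hg]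
  exact iInf_congr fun U => iInf_congr fun hU => (outerExt_of_isOpen hU.1).symm

lemma outerExt_eq_iSup_of_isOpen (hg : Monotone g) (hU : IsOpen U)
    (h : g U ≤ ⨆ (K : Set X) (_ : IsCompact K ∧ K ⊆ U), outerExt g K) :
    outerExt g U = ⨆ (K : Set X) (_ : IsCompact K ∧ K ⊆ U), outerExt g K :=
  le_antisymm ((outerExt_of_isOpen hU).trans_le h)
    (iSup₂_le fun _ hK => monotone_outerExt hg hK.2)

lemma le_outerExt_add_outerExt {c : EReal} (hg₁ : Monotone g₁) (hg₂ : Monotone g₂)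
    (h₁ : 0 ≤ g₁ ∅) (h₂ : 0 ≤ g₂ ∅)
    (h : ∀ U V, IsOpen U → A ⊆ U → IsOpen V → B ⊆ V → c ≤ g₁ U + g₂ V) :
    c ≤ outerExt g₁ A + outerExt g₂ B := by
  have hnonneg₁ : ∀ U, 0 ≤ g₁ U := fun U => h₁.trans (hg₁ (empty_subset U))
  have hnonneg₂ : ∀ V, 0 ≤ g₂ V := fun V => h₂.trans (hg₂ (empty_subset V))
  rw [outerExt_eq_iInf hg₁, outerExt_eq_iInf hg₂]
  refine EReal.le_iInf_add_iInf (fun U => le_iInf fun _ => hnonneg₁ U)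
    (fun V => le_iInf fun _ => hnonneg₂ V) fun U V =>
    EReal.le_iInf_add_iInf (fun _ => hnonneg₁ U) (fun _ => hnonneg₂ V) fun hU hV => ?_
  exact h U V hU.1 hU.2 hV.1 hV.2

lemma outerExt_le_outerExt_add_outerExt (hg : Monotone g) (hg₁ : Monotone g₁)
    (hg₂ : Monotone g₂) (h₁ : 0 ≤ g₁ ∅) (h₂ : 0 ≤ g₂ ∅)
    (h : ∀ U, IsOpen U → g U ≤ g₁ U + g₂ U) (A : Set X) :
    outerExt g A ≤ outerExt g₁ A + outerExt g₂ A :=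
  le_outerExt_add_outerExt hg₁ hg₂ h₁ h₂ fun U V hU hAU hV hAV => calc
    outerExt g A ≤ outerExt g (U ∩ V) := monotone_outerExt hg (subset_inter hAU hAV)
    _ = g (U ∩ V) := outerExt_of_isOpen (hU.inter hV)
    _ ≤ g₁ (U ∩ V) + g₂ (U ∩ V) := h _ (hU.inter hV)
    _ ≤ g₁ U + g₂ V := add_le_add (hg₁ inter_subset_left) (hg₂ inter_subset_right)

variable (hg : Monotone g)
    (hadd : ∀ U V, IsOpen U → IsOpen V → Disjoint U V → g (U ∪ V) = g U + g V)
include hg hadd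

lemma outerExt_union [T2Space X] (h0 : 0 ≤ g ∅) (hC : IsCompact C) (hK : IsCompact K)
    (hCK : Disjoint C K) : outerExt g (C ∪ K) = outerExt g C + outerExt g K := by
  obtain ⟨S, T, hS, hT, hCS, hKT, hST⟩ := SeparatedNhds.of_isCompact_isCompact hC hK hCK
  refine le_antisymm (le_outerExt_add_outerExt hg hg h0 h0 fun U V hU hCU hV hKV => ?_) ?_
  · have hUV : Disjoint (U ∩ S) (V ∩ T) := hST.mono inter_subset_right inter_subset_right
    calc outerExt g (C ∪ K) ≤ outerExt g ((U ∩ S) ∪ (V ∩ T)) :=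
          monotone_outerExt hg (union_subset_union (subset_inter hCU hCS) (subset_inter hKV hKT))
      _ = g (U ∩ S) + g (V ∩ T) := by
          rw [outerExt_of_isOpen ((hU.inter hS).union (hV.inter hT)),
            hadd _ _ (hU.inter hS) (hV.inter hT) hUV]
      _ ≤ g U + g V := add_le_add (hg inter_subset_left) (hg inter_subset_left)
  · rw [outerExt_eq_iInf hg (C ∪ K)]
    refine le_iInf₂ fun W hW => ?_
    have hWS : Disjoint (W ∩ S) (W ∩ T) := hST.mono inter_subset_right inter_subset_right
    calc outerExt g C + outerExt g K ≤ outerExt g (W ∩ S) + outerExt g (W ∩ T) :=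
          add_le_add (monotone_outerExt hg (subset_inter (subset_union_left.trans hW.2) hCS))
            (monotone_outerExt hg (subset_inter (subset_union_right.trans hW.2) hKT))
      _ = g ((W ∩ S) ∪ (W ∩ T)) := by
          rw [outerExt_of_isOpen (hW.1.inter hS), outerExt_of_isOpen (hW.1.inter hT),
            hadd _ _ (hW.1.inter hS) (hW.1.inter hT) hWS]
      _ ≤ g W := hg (union_subset inter_subset_left inter_subset_left)

lemma isDTME_outerExt [T2Space X] (h0 : g ∅ = 0)
    (hinner : ∀ U, IsOpen U → g U ≤ ⨆ (K : Set X) (_ : IsCompact K ∧ K ⊆ U), outerExt g K) :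
    IsDTME (outerExt g) :=
  ⟨fun A _ => outerExt_nonneg hg h0.ge A,
    ⟨∅, Or.inl isOpen_empty, by rw [outerExt_of_isOpen isOpen_empty, h0]; exact EReal.zero_ne_top⟩,
    fun _ _ hC hK hCK => outerExt_union hg hadd h0.ge hC hK hCK,
    fun U hU => outerExt_eq_iSup_of_isOpen hg hU (hinner U hU),
    fun F _ => outerExt_eq_iInf_outerExt hg F⟩

end OuterExt

section PosVar
variable [TopologicalSpace X] {lam : Set X → EReal} {A K U V : Set X}

lemma posVar_eq_outerExt (lam : Set X → EReal) : posVar lam = outerExt (posVarOpen lam) := rfl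

lemma le_posVarOpen (hK : IsCompact K) (hKU : K ⊆ U) : lam K ≤ posVarOpen lam U :=
  le_iSup₂_of_le K ⟨hK, hKU⟩ le_rfl

lemma monotone_posVarOpen : Monotone (posVarOpen lam) := fun _ _ hUV =>
  iSup₂_le fun _ hK => le_posVarOpen hK.1 (hK.2.trans hUV)

lemma posVarOpen_empty (h0 : lam ∅ = 0) : posVarOpen lam ∅ = 0 :=
  le_antisymm (iSup₂_le fun _ hK => (subset_empty_iff.mp hK.2).symm ▸ h0.le)
    (h0 ▸ le_posVarOpen isCompact_empty subset_rfl)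

lemma le_posVar (hK : IsCompact K) (hKA : K ⊆ A) : lam K ≤ posVar lam A := by
  rw [posVar_eq_outerExt, outerExt_eq_iInf monotone_posVarOpen]
  exact le_iInf₂ fun _ hU => le_posVarOpen hK (hKA.trans hU.2)

lemma posVarOpen_le_iSup_posVar (U : Set X) :
    posVarOpen lam U ≤ ⨆ (K : Set X) (_ : IsCompact K ∧ K ⊆ U), posVar lam K :=
  iSup₂_le fun K hK => le_iSup₂_of_le K hK (le_posVar hK.1 subset_rfl)

lemma IsAdditiveOnCompacts.sum_le_posVarOpen (hadd : IsAdditiveOnCompacts lam) (h0 : lam ∅ = 0)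
    {ι : Type*} {K : ι → Set X} (hK : ∀ i, IsCompact (K i)) (hKU : ∀ i, K i ⊆ U)
    (hd : Pairwise (Function.onFun Disjoint K)) (s : Finset ι) :
    ∑ i ∈ s, lam (K i) ≤ posVarOpen lam U :=
  hadd.map_biUnion h0 hK hd s ▸
    le_posVarOpen (s.isCompact_biUnion fun i _ => hK i) (iUnion₂_subset fun i _ => hKU i)

lemma IsAdditiveOnCompacts.posVarOpen_union (hadd : IsAdditiveOnCompacts lam) (hU : IsOpen U)
    (hV : IsOpen V) (hUV : Disjoint U V) :
    posVarOpen lam (U ∪ V) = posVarOpen lam U + posVarOpen lam V := by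
  refine le_antisymm (iSup₂_le fun K hK => ?_)
    (EReal.iSup_add_iSup_le fun K₁ K₂ => EReal.iSup_add_iSup_le fun h₁ h₂ => ?_)
  · rw [hadd.eq_add_inter hK.1 hK.2 hU hV hUV]
    exact add_le_add
      (le_posVarOpen (hK.1.inter_of_subset_union hK.2 hV hUV) inter_subset_right)
      (le_posVarOpen (hK.1.inter_of_subset_union (union_comm U V ▸ hK.2) hU hUV.symm)
        inter_subset_right)
  · rw [← hadd _ _ h₁.1 h₂.1 (hUV.mono h₁.2 h₂.2)]
    exact le_posVarOpen (h₁.1.union h₂.1) (union_subset_union h₁.2 h₂.2)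

theorem IsAdditiveOnCompacts.isDTME_posVar [T2Space X] (hadd : IsAdditiveOnCompacts lam)
    (h0 : lam ∅ = 0) : IsDTME (posVar lam) :=
  isDTME_outerExt monotone_posVarOpen (fun _ _ hU hV => hadd.posVarOpen_union hU hV)
    (posVarOpen_empty h0) fun U _ => posVarOpen_le_iSup_posVar U

end PosVar

section TotVar
variable [TopologicalSpace X] {lam : Set X → EReal} {A U V : Set X}

lemma totVar_eq_outerExt (lam : Set X → EReal) : totVar lam = outerExt (totVarOpen lam) := rfl

lemma le_totVarOpen {n : ℕ} {K : Fin n → Set X} (hK : ∀ i, IsCompact (K i))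
    (hKU : ∀ i, K i ⊆ U) (hd : Pairwise (Function.onFun Disjoint K)) :
    ∑ i, max (lam (K i)) (-lam (K i)) ≤ totVarOpen lam U :=
  le_iSup_of_le n (le_iSup_of_le K (le_iSup_of_le ⟨fun i => ⟨hK i, hKU i⟩, hd⟩ le_rfl))

lemma monotone_totVarOpen : Monotone (totVarOpen lam) := fun _ _ hUV =>
  iSup_le fun _ => iSup_le fun _ => iSup_le fun hK =>
    le_totVarOpen (fun i => (hK.1 i).1) (fun i => (hK.1 i).2.trans hUV) hK.2

lemma totVarOpen_empty (h0 : lam ∅ = 0) : totVarOpen lam ∅ = 0 := by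
  refine le_antisymm (iSup_le fun n => iSup_le fun K => iSup_le fun hK => ?_) ?_
  · refine (Finset.sum_eq_zero fun i _ => ?_).le
    rw [subset_empty_iff.mp (hK.1 i).2, h0, neg_zero, max_self]
  · simpa using le_totVarOpen (lam := lam) (U := ∅) (K := Fin.elim0) (fun i => i.elim0)
      (fun i => i.elim0) fun i => i.elim0

lemma totVarOpen_le_iSup_totVar (U : Set X) :
    totVarOpen lam U ≤ ⨆ (K : Set X) (_ : IsCompact K ∧ K ⊆ U), totVar lam K := by
  refine iSup_le fun n => iSup_le fun K => iSup_le fun hK => ?_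
  refine le_iSup₂_of_le (⋃ i, K i)
    ⟨isCompact_iUnion fun i => (hK.1 i).1, iUnion_subset fun i => (hK.1 i).2⟩ ?_
  rw [totVar_eq_outerExt, outerExt_eq_iInf monotone_totVarOpen]
  exact le_iInf₂ fun W hW =>
    le_totVarOpen (fun i => (hK.1 i).1) (fun i => (subset_iUnion K i).trans hW.2) hK.2

lemma totVarOpen_add_le_of_disjoint (hUV : Disjoint U V) :
    totVarOpen lam U + totVarOpen lam V ≤ totVarOpen lam (U ∪ V) := by
  refine EReal.iSup_add_iSup_le fun n m => EReal.iSup_add_iSup_le fun K₁ K₂ =>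
    EReal.iSup_add_iSup_le fun h₁ h₂ => ?_
  have hsum : ∑ i, max (lam (Fin.append K₁ K₂ i)) (-lam (Fin.append K₁ K₂ i)) =
      ∑ i, max (lam (K₁ i)) (-lam (K₁ i)) + ∑ i, max (lam (K₂ i)) (-lam (K₂ i)) := by
    simp only [Fin.sum_univ_add, Fin.append_left, Fin.append_right]
  have hK : ∀ i, IsCompact (Fin.append K₁ K₂ i) := Fin.addCases
    (fun i => by simpa only [Fin.append_left] using (h₁.1 i).1)
    (fun i => by simpa only [Fin.append_right] using (h₂.1 i).1)
  have hKU : ∀ i, Fin.append K₁ K₂ i ⊆ U ∪ V := Fin.addCases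
    (fun i => by simpa only [Fin.append_left] using (h₁.1 i).2.trans subset_union_left)
    (fun i => by simpa only [Fin.append_right] using (h₂.1 i).2.trans subset_union_right)
  have hd : Pairwise (Function.onFun Disjoint (Fin.append K₁ K₂)) := by
    refine Fin.addCases (fun i => ?_) (fun i => ?_) <;>
      refine Fin.addCases (fun j => ?_) (fun j => ?_) <;>
      intro hij <;> simp only [Function.onFun, Fin.append_left, Fin.append_right]
    · exact h₁.2 fun h => hij (congrArg _ h)
    · exact hUV.mono (h₁.1 i).2 (h₂.1 j).2
    · exact (hUV.mono (h₁.1 j).2 (h₂.1 i).2).symm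
    · exact h₂.2 fun h => hij (congrArg _ h)
  exact hsum ▸ le_totVarOpen hK hKU hd

lemma IsAdditiveOnCompacts.totVarOpen_union (hadd : IsAdditiveOnCompacts lam) (hU : IsOpen U)
    (hV : IsOpen V) (hUV : Disjoint U V) :
    totVarOpen lam (U ∪ V) = totVarOpen lam U + totVarOpen lam V := by
  refine le_antisymm (iSup_le fun n => iSup_le fun K => iSup_le fun hK => ?_)
    (totVarOpen_add_le_of_disjoint hUV)
  have hKU i : IsCompact (K i ∩ U) := (hK.1 i).1.inter_of_subset_union (hK.1 i).2 hV hUV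
  have hKV i : IsCompact (K i ∩ V) :=
    (hK.1 i).1.inter_of_subset_union (union_comm U V ▸ (hK.1 i).2) hU hUV.symm
  have hdU : Pairwise (Function.onFun Disjoint fun i => K i ∩ U) :=
    fun i j hij => (hK.2 hij).mono inter_subset_left inter_subset_left
  have hdV : Pairwise (Function.onFun Disjoint fun i => K i ∩ V) :=
    fun i j hij => (hK.2 hij).mono inter_subset_left inter_subset_left
  calc ∑ i, max (lam (K i)) (-lam (K i))
      ≤ ∑ i, (max (lam (K i ∩ U)) (-lam (K i ∩ U)) + max (lam (K i ∩ V)) (-lam (K i ∩ V))) :=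
        Finset.sum_le_sum fun i _ =>
          hadd.eq_add_inter (hK.1 i).1 (hK.1 i).2 hU hV hUV ▸ EReal.max_neg_add_le _ _
    _ = ∑ i, max (lam (K i ∩ U)) (-lam (K i ∩ U)) +
          ∑ i, max (lam (K i ∩ V)) (-lam (K i ∩ V)) := Finset.sum_add_distrib
    _ ≤ totVarOpen lam U + totVarOpen lam V :=
        add_le_add (le_totVarOpen hKU (fun _ => inter_subset_right) hdU)
          (le_totVarOpen hKV (fun _ => inter_subset_right) hdV)

theorem IsAdditiveOnCompacts.isDTME_totVar [T2Space X] (hadd : IsAdditiveOnCompacts lam)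
    (h0 : lam ∅ = 0) : IsDTME (totVar lam) :=
  isDTME_outerExt monotone_totVarOpen (fun _ _ hU hV => hadd.totVarOpen_union hU hV)
    (totVarOpen_empty h0) fun U _ => totVarOpen_le_iSup_totVar U

end TotVar

section Comparison
variable [TopologicalSpace X] {lam : Set X → EReal}

lemma totVarOpen_le_posVarOpen_add (hadd : IsAdditiveOnCompacts lam)
    (hadd' : IsAdditiveOnCompacts (fun K => -lam K)) (h0 : lam ∅ = 0) (U : Set X) :
    totVarOpen lam U ≤ posVarOpen lam U + posVarOpen (fun K => -lam K) U := by
  have h0' : -lam ∅ = 0 := by rw [h0, neg_zero]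
  refine iSup_le fun n => iSup_le fun K => iSup_le fun hK => ?_
  have hKc i : IsCompact (K i) := (hK.1 i).1
  have hKU i : K i ⊆ U := (hK.1 i).2
  rw [← Finset.sum_filter_add_sum_filter_not Finset.univ fun i => -lam (K i) ≤ lam (K i)]
  calc _ = ∑ i ∈ Finset.univ.filter (fun i => -lam (K i) ≤ lam (K i)), lam (K i) +
        ∑ i ∈ Finset.univ.filter (fun i => ¬-lam (K i) ≤ lam (K i)), -lam (K i) := by
        congr 1
        · exact Finset.sum_congr rfl fun i hi => max_eq_left (Finset.mem_filter.mp hi).2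
        · exact Finset.sum_congr rfl fun i hi =>
            max_eq_right (not_le.mp (Finset.mem_filter.mp hi).2).le
    _ ≤ _ := add_le_add (hadd.sum_le_posVarOpen h0 hKc hKU hK.2 _)
        (hadd'.sum_le_posVarOpen h0' hKc hKU hK.2 _)

lemma totVar_le_posVar_add_negVar (hadd : IsAdditiveOnCompacts lam)
    (hadd' : IsAdditiveOnCompacts (fun K => -lam K)) (h0 : lam ∅ = 0) (A : Set X) :
    totVar lam A ≤ posVar lam A + negVar lam A :=
  outerExt_le_outerExt_add_outerExt monotone_totVarOpen monotone_posVarOpen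
    monotone_posVarOpen (posVarOpen_empty h0).ge (posVarOpen_empty (by rw [h0, neg_zero])).ge
    (fun U _ => totVarOpen_le_posVarOpen_add hadd hadd' h0 U) A

end Comparison

theorem posVar_negVar_totVar_isDTM_general
    [TopologicalSpace X] [T2Space X]
    (lam : Set X → EReal)
    (hadd : ∀ C K : Set X, IsCompact C → IsCompact K → Disjoint C K →
      lam (C ∪ K) = lam C + lam K)
    (hone : (∀ K : Set X, IsCompact K → lam K ≠ ⊤) ∨ (∀ K : Set X, IsCompact K → lam K ≠ ⊥))
    (hne : ∃ K : Set X, IsCompact K ∧ lam K ≠ ⊤ ∧ lam K ≠ ⊥) :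
    IsDTME (posVar lam) ∧ IsDTME (negVar lam) ∧ IsDTME (totVar lam) ∧
    ∀ A : Set X, IsOpen A ∨ IsClosed A → totVar lam A ≤ posVar lam A + negVar lam A := by
  have hadd : IsAdditiveOnCompacts lam := hadd
  have h0 : lam ∅ = 0 := hadd.map_empty hne
  have hadd' : IsAdditiveOnCompacts (fun K => -lam K) := hadd.neg hone
  exact ⟨hadd.isDTME_posVar h0, hadd'.isDTME_posVar (by rw [h0, neg_zero]),
    hadd.isDTME_totVar h0, fun A _ => totVar_le_posVar_add_negVar hadd hadd' h0 A⟩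

/-- Proposition 2.4 (I): for a signed set function `λ` on compact subsets of a locally
compact Hausdorff space, assuming at most one of `∞, -∞`, not identically `∞` or `-∞`, and
finitely additive on compact sets, the set functions `λ⁺`, `λ⁻ = (-λ)⁺` and `|λ|` are
deficient topological measures, and `|λ| ≤ λ⁺ + λ⁻` on open and closed sets. -/
theorem posVar_negVar_totVar_isDTM
    [TopologicalSpace X] [LocallyCompactSpace X] [T2Space X]
    (lam : Set X → EReal)
    (hadd : ∀ C K : Set X, IsCompact C → IsCompact K → Disjoint C K →
      lam (C ∪ K) = lam C + lam K)
    (hone : (∀ K : Set X, IsCompact K → lam K ≠ ⊤) ∨ (∀ K : Set X, IsCompact K → lam K ≠ ⊥))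
    (hne : ∃ K : Set X, IsCompact K ∧ lam K ≠ ⊤ ∧ lam K ≠ ⊥) :
    IsDTME (posVar lam) ∧ IsDTME (negVar lam) ∧ IsDTME (totVar lam) ∧
    ∀ A : Set X, IsOpen A ∨ IsClosed A → totVar lam A ≤ posVar lam A + negVar lam A :=
  posVar_negVar_totVar_isDTM_general lam hadd hone hne
end

section
/- Let X be a locally compact Hausdorff space and let λ be a set function from the compact subsets of X to [-∞,∞] that is finitely additive on compact sets, not identically ∞ or -∞. If sup{|λ(K)| : K compact} ≤ M < ∞, then λ⁺, λ⁻, and |λ| are real-valued (finite) deficient topological measures with λ⁺(X) ≤ M, λ⁻(X) ≤ M, and |λ|(X) ≤ 2M. -/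
open Set Classical

variable {X : Type*}

section Aux

variable [TopologicalSpace X] {lam : Set X → EReal} {M : ℝ}

private lemma ecoe_sum {ι : Type*} (s : Finset ι) (f : ι → ℝ) :
    ((∑ i ∈ s, f i : ℝ) : EReal) = ∑ i ∈ s, (f i : EReal) :=
  map_sum (⟨⟨Real.toEReal, EReal.coe_zero⟩, EReal.coe_add⟩ : ℝ →+ EReal) f s

private lemma ecoe_max (a b : ℝ) : ((max a b : ℝ) : EReal) = max (a : EReal) b :=
  EReal.coe_strictMono.monotone.map_max

private lemma lam_ne_top (hM : ∀ K : Set X, IsCompact K → max (lam K) (-(lam K)) ≤ (M : EReal))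
    {K : Set X} (hK : IsCompact K) : lam K ≠ ⊤ :=
  ne_top_of_le_ne_top (EReal.coe_ne_top M) ((le_max_left _ _).trans (hM K hK))

private lemma lam_ne_bot (hM : ∀ K : Set X, IsCompact K → max (lam K) (-(lam K)) ≤ (M : EReal))
    {K : Set X} (hK : IsCompact K) : lam K ≠ ⊥ := by
  intro h
  have := (le_max_right _ _).trans (hM K hK)
  rw [h] at this
  simp at this

private lemma lam_le (hM : ∀ K : Set X, IsCompact K → max (lam K) (-(lam K)) ≤ (M : EReal))
    {K : Set X} (hK : IsCompact K) : lam K ≤ (M : EReal) :=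
  (le_max_left _ _).trans (hM K hK)

private lemma lam_coe (hM : ∀ K : Set X, IsCompact K → max (lam K) (-(lam K)) ≤ (M : EReal))
    {K : Set X} (hK : IsCompact K) : lam K = (((lam K).toReal : ℝ) : EReal) :=
  (EReal.coe_toReal (lam_ne_top hM hK) (lam_ne_bot hM hK)).symm

private lemma lam_empty
    (hadd : ∀ C K : Set X, IsCompact C → IsCompact K → Disjoint C K →
      lam (C ∪ K) = lam C + lam K)
    (hM : ∀ K : Set X, IsCompact K → max (lam K) (-(lam K)) ≤ (M : EReal)) :
    lam (∅ : Set X) = 0 := by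
  have h := hadd ∅ ∅ isCompact_empty isCompact_empty disjoint_bot_left
  rw [union_self] at h
  rw [lam_coe hM isCompact_empty] at h ⊢
  rw [← EReal.coe_add, EReal.coe_eq_coe_iff] at h
  have : (lam (∅ : Set X)).toReal = 0 := by linarith
  rw [this]; rfl

private lemma pVO_le_M (hM : ∀ K : Set X, IsCompact K → max (lam K) (-(lam K)) ≤ (M : EReal))
    (U : Set X) : posVarOpen lam U ≤ (M : EReal) :=
  iSup₂_le fun _ hK => lam_le hM hK.1

private lemma pVO_nonneg
    (hadd : ∀ C K : Set X, IsCompact C → IsCompact K → Disjoint C K →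
      lam (C ∪ K) = lam C + lam K)
    (hM : ∀ K : Set X, IsCompact K → max (lam K) (-(lam K)) ≤ (M : EReal))
    (U : Set X) : 0 ≤ posVarOpen lam U :=
  (lam_empty hadd hM).symm.le.trans
    (le_iSup₂ (f := fun K (_ : IsCompact K ∧ K ⊆ U) => lam K) ∅ ⟨isCompact_empty, empty_subset U⟩)

private lemma pVO_mono {U V : Set X} (h : U ⊆ V) : posVarOpen lam U ≤ posVarOpen lam V :=
  iSup₂_le fun K hK => le_iSup₂_of_le K ⟨hK.1, hK.2.trans h⟩ le_rfl

private lemma posVar_eq_iInf (A : Set X) :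
    posVar lam A = ⨅ (U : Set X) (_ : IsOpen U ∧ A ⊆ U), posVarOpen lam U := by
  unfold posVar
  split_ifs with h
  · refine le_antisymm (le_iInf₂ fun U hU => pVO_mono hU.2) (iInf₂_le A ⟨h, subset_rfl⟩)
  · rfl

private lemma posVar_open {U : Set X} (h : IsOpen U) : posVar lam U = posVarOpen lam U :=
  if_pos h

private lemma posVar_le_M (hM : ∀ K : Set X, IsCompact K → max (lam K) (-(lam K)) ≤ (M : EReal))
    (A : Set X) : posVar lam A ≤ (M : EReal) := by
  rw [posVar_eq_iInf]
  exact iInf₂_le_of_le univ ⟨isOpen_univ, subset_univ A⟩ (pVO_le_M hM univ)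

private lemma posVar_nonneg
    (hadd : ∀ C K : Set X, IsCompact C → IsCompact K → Disjoint C K →
      lam (C ∪ K) = lam C + lam K)
    (hM : ∀ K : Set X, IsCompact K → max (lam K) (-(lam K)) ≤ (M : EReal))
    (A : Set X) : 0 ≤ posVar lam A := by
  rw [posVar_eq_iInf]
  exact le_iInf₂ fun U _ => pVO_nonneg hadd hM U

private lemma lam_le_posVar {K : Set X} (hK : IsCompact K) : lam K ≤ posVar lam K := by
  rw [posVar_eq_iInf]
  exact le_iInf₂ fun U hU =>
    le_iSup₂ (f := fun K' (_ : IsCompact K' ∧ K' ⊆ U) => lam K') K ⟨hK, hU.2⟩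

private lemma split_compact {K' V₁ V₂ : Set X} (hK' : IsCompact K') (hV₁ : IsOpen V₁)
    (hV₂ : IsOpen V₂) (hsub : K' ⊆ V₁ ∪ V₂) (hd : Disjoint V₁ V₂) :
    (K' \ V₂ ⊆ V₁) ∧ (K' \ V₁ ⊆ V₂) ∧ IsCompact (K' \ V₂) ∧ IsCompact (K' \ V₁) ∧
      Disjoint (K' \ V₂) (K' \ V₁) ∧ (K' \ V₂) ∪ (K' \ V₁) = K' := by
  have h1 : K' \ V₂ ⊆ V₁ := fun x hx => (hsub hx.1).resolve_right hx.2
  have h2 : K' \ V₁ ⊆ V₂ := fun x hx => (hsub hx.1).resolve_left hx.2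
  refine ⟨h1, h2, hK'.diff hV₂, hK'.diff hV₁, disjoint_of_subset h1 h2 hd, ?_⟩
  apply subset_antisymm (union_subset diff_subset diff_subset)
  intro x hx
  rcases hsub hx with h | h
  · exact Or.inl ⟨hx, Set.disjoint_left.mp hd h⟩
  · exact Or.inr ⟨hx, Set.disjoint_right.mp hd h⟩

private lemma pVO_union_le
    (hadd : ∀ C K : Set X, IsCompact C → IsCompact K → Disjoint C K →
      lam (C ∪ K) = lam C + lam K)
    {V₁ V₂ : Set X} (hV₁ : IsOpen V₁) (hV₂ : IsOpen V₂) (hd : Disjoint V₁ V₂) :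
    posVarOpen lam (V₁ ∪ V₂) ≤ posVarOpen lam V₁ + posVarOpen lam V₂ := by
  refine iSup₂_le fun K' hK' => ?_
  obtain ⟨h1, h2, hc1, hc2, hdis, hun⟩ := split_compact hK'.1 hV₁ hV₂ hK'.2 hd
  have heq := hadd _ _ hc1 hc2 hdis
  rw [hun] at heq
  rw [heq]
  exact add_le_add
    (le_iSup₂ (f := fun K (_ : IsCompact K ∧ K ⊆ V₁) => lam K) _ ⟨hc1, h1⟩)
    (le_iSup₂ (f := fun K (_ : IsCompact K ∧ K ⊆ V₂) => lam K) _ ⟨hc2, h2⟩)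

private lemma pVO_superadd
    (hadd : ∀ C K : Set X, IsCompact C → IsCompact K → Disjoint C K →
      lam (C ∪ K) = lam C + lam K)
    {U₁ U₂ U : Set X} (h1 : U₁ ⊆ U) (h2 : U₂ ⊆ U) (hd : Disjoint U₁ U₂) :
    posVarOpen lam U₁ + posVarOpen lam U₂ ≤ posVarOpen lam U := by
  refine EReal.add_le_of_forall_lt fun a' ha' b' hb' => ?_
  unfold posVarOpen at ha' hb'
  rw [lt_iSup_iff] at ha' hb'
  obtain ⟨K₁, ha'⟩ := ha'
  obtain ⟨K₂, hb'⟩ := hb'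
  rw [lt_iSup_iff] at ha' hb'
  obtain ⟨hK₁, ha'⟩ := ha'
  obtain ⟨hK₂, hb'⟩ := hb'
  calc a' + b' ≤ lam K₁ + lam K₂ := add_le_add ha'.le hb'.le
    _ = lam (K₁ ∪ K₂) :=
      (hadd _ _ hK₁.1 hK₂.1 (disjoint_of_subset hK₁.2 hK₂.2 hd)).symm
    _ ≤ posVarOpen lam U :=
      le_iSup₂ (f := fun K (_ : IsCompact K ∧ K ⊆ U) => lam K) _
        ⟨hK₁.1.union hK₂.1, union_subset (hK₁.2.trans h1) (hK₂.2.trans h2)⟩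


private lemma posVar_ne_bot
    (hadd : ∀ C K : Set X, IsCompact C → IsCompact K → Disjoint C K →
      lam (C ∪ K) = lam C + lam K)
    (hM : ∀ K : Set X, IsCompact K → max (lam K) (-(lam K)) ≤ (M : EReal))
    (A : Set X) : posVar lam A ≠ ⊥ := by
  intro h
  have := posVar_nonneg hadd hM A
  rw [h] at this
  simp at this

private lemma posVar_add [T2Space X]
    (hadd : ∀ C K : Set X, IsCompact C → IsCompact K → Disjoint C K →
      lam (C ∪ K) = lam C + lam K)
    (hM : ∀ K : Set X, IsCompact K → max (lam K) (-(lam K)) ≤ (M : EReal))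
    {C K : Set X} (hC : IsCompact C) (hK : IsCompact K) (hd : Disjoint C K) :
    posVar lam (C ∪ K) = posVar lam C + posVar lam K := by
  obtain ⟨V₁, V₂, hV₁, hV₂, hCV, hKV, hVd⟩ := SeparatedNhds.of_isCompact_isCompact hC hK hd
  refine le_antisymm ?_ ?_
  · -- posVar (C ∪ K) ≤ posVar C + posVar K
    refine EReal.le_add_of_forall_gt
      (Or.inl (posVar_ne_bot hadd hM C))
      (Or.inl (ne_top_of_le_ne_top (EReal.coe_ne_top M) (posVar_le_M hM C)))
      fun a' ha' b' hb' => ?_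
    rw [posVar_eq_iInf C] at ha'
    rw [posVar_eq_iInf K] at hb'
    simp only [gt_iff_lt, iInf_lt_iff] at ha' hb'
    obtain ⟨U₁, hU₁, ha'⟩ := ha'
    obtain ⟨U₂, hU₂, hb'⟩ := hb'
    have hopen : IsOpen ((U₁ ∩ V₁) ∪ (U₂ ∩ V₂)) :=
      ((hU₁.1.inter hV₁).union (hU₂.1.inter hV₂))
    have hsub : C ∪ K ⊆ (U₁ ∩ V₁) ∪ (U₂ ∩ V₂) :=
      union_subset_union (subset_inter hU₁.2 hCV) (subset_inter hU₂.2 hKV)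
    calc posVar lam (C ∪ K) ≤ posVarOpen lam ((U₁ ∩ V₁) ∪ (U₂ ∩ V₂)) := by
          rw [posVar_eq_iInf]
          exact iInf₂_le _ ⟨hopen, hsub⟩
      _ ≤ posVarOpen lam (U₁ ∩ V₁) + posVarOpen lam (U₂ ∩ V₂) :=
          pVO_union_le hadd (hU₁.1.inter hV₁) (hU₂.1.inter hV₂)
            (hVd.mono inter_subset_right inter_subset_right)
      _ ≤ a' + b' := add_le_add ((pVO_mono inter_subset_left).trans ha'.le)
            ((pVO_mono inter_subset_left).trans hb'.le)
  · -- posVar C + posVar K ≤ posVar (C ∪ K)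
    rw [posVar_eq_iInf (C ∪ K)]
    refine le_iInf₂ fun U hU => ?_
    calc posVar lam C + posVar lam K
        ≤ posVarOpen lam (U ∩ V₁) + posVarOpen lam (U ∩ V₂) := by
          refine add_le_add ?_ ?_
          · rw [posVar_eq_iInf]
            exact iInf₂_le _ ⟨hU.1.inter hV₁, subset_inter ((subset_union_left).trans hU.2) hCV⟩
          · rw [posVar_eq_iInf]
            exact iInf₂_le _ ⟨hU.1.inter hV₂, subset_inter ((subset_union_right).trans hU.2) hKV⟩
      _ ≤ posVarOpen lam U :=
          pVO_superadd hadd inter_subset_left inter_subset_left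
            (hVd.mono inter_subset_right inter_subset_right)

private lemma posVar_inner {U : Set X} (hU : IsOpen U) :
    posVar lam U = ⨆ (K : Set X) (_ : IsCompact K ∧ K ⊆ U), posVar lam K := by
  rw [posVar_open hU]
  refine le_antisymm ?_ ?_
  · exact iSup₂_le fun K hK => le_iSup₂_of_le K hK (lam_le_posVar hK.1)
  · refine iSup₂_le fun K hK => ?_
    rw [posVar_eq_iInf]
    exact iInf₂_le_of_le U ⟨hU, hK.2⟩ le_rfl

private lemma posVar_outer {F : Set X} (_ : IsClosed F) :
    posVar lam F = ⨅ (U : Set X) (_ : IsOpen U ∧ F ⊆ U), posVar lam U := by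
  rw [posVar_eq_iInf F]
  refine le_antisymm (le_iInf₂ fun U hU => ?_) (le_iInf₂ fun U hU => ?_)
  · exact iInf₂_le_of_le U hU (posVar_open hU.1).ge
  · exact iInf₂_le_of_le U hU (posVar_open hU.1).le

private lemma posVar_isDTME [T2Space X]
    (hadd : ∀ C K : Set X, IsCompact C → IsCompact K → Disjoint C K →
      lam (C ∪ K) = lam C + lam K)
    (hM : ∀ K : Set X, IsCompact K → max (lam K) (-(lam K)) ≤ (M : EReal)) :
    IsDTME (posVar lam) :=
  ⟨fun A _ => posVar_nonneg hadd hM A,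
   ⟨univ, Or.inl isOpen_univ,
     ne_top_of_le_ne_top (EReal.coe_ne_top M) (posVar_le_M hM univ)⟩,
   fun _ _ hC hK hd => posVar_add hadd hM hC hK hd,
   fun _ hU => posVar_inner hU,
   fun _ hF => posVar_outer hF⟩


private lemma emax_abs (r : ℝ) : max (r : EReal) (-(r : EReal)) = ((|r| : ℝ) : EReal) := by
  rw [← EReal.coe_neg, ← ecoe_max, abs_eq_max_neg]

private lemma lam_biUnion {ι : Type*}
    (hadd : ∀ C K : Set X, IsCompact C → IsCompact K → Disjoint C K →
      lam (C ∪ K) = lam C + lam K)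
    (hM : ∀ K : Set X, IsCompact K → max (lam K) (-(lam K)) ≤ (M : EReal))
    (s : Finset ι) (K : ι → Set X) (hc : ∀ i ∈ s, IsCompact (K i))
    (hd : ∀ i ∈ s, ∀ j ∈ s, i ≠ j → Disjoint (K i) (K j)) :
    lam (⋃ i ∈ s, K i) = ∑ i ∈ s, lam (K i) := by
  classical
  induction s using Finset.induction_on with
  | empty => simpa using lam_empty hadd hM
  | @insert a s ha ih =>
    rw [Finset.set_biUnion_insert, Finset.sum_insert ha,
      hadd _ _ (hc a (Finset.mem_insert_self a s))
        (s.isCompact_biUnion fun i hi => hc i (Finset.mem_insert_of_mem hi)) ?_,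
      ih (fun i hi => hc i (Finset.mem_insert_of_mem hi))
        (fun i hi j hj hij =>
          hd i (Finset.mem_insert_of_mem hi) j (Finset.mem_insert_of_mem hj) hij)]
    simp only [Set.disjoint_iUnion_right]
    intro i hi
    exact hd a (Finset.mem_insert_self a s) i (Finset.mem_insert_of_mem hi)
      (fun h => ha (h ▸ hi))

private lemma sum_abs_le
    (hadd : ∀ C K : Set X, IsCompact C → IsCompact K → Disjoint C K →
      lam (C ∪ K) = lam C + lam K)
    (hM : ∀ K : Set X, IsCompact K → max (lam K) (-(lam K)) ≤ (M : EReal))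
    {n : ℕ} (K : Fin n → Set X) (hc : ∀ i, IsCompact (K i))
    (hd : Pairwise (Function.onFun Disjoint K)) :
    ∑ i, max (lam (K i)) (-(lam (K i))) ≤ ((2 * M : ℝ) : EReal) := by
  classical
  set t : Fin n → ℝ := fun i => (lam (K i)).toReal with ht
  have hsum : ∀ s : Finset (Fin n), ((∑ i ∈ s, t i : ℝ) : EReal) = lam (⋃ i ∈ s, K i) := by
    intro s
    rw [ecoe_sum, lam_biUnion hadd hM s K (fun i _ => hc i) (fun i _ j _ hij => hd hij)]
    exact Finset.sum_congr rfl fun i _ => (lam_coe hM (hc i)).symm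
  have hcU : ∀ s : Finset (Fin n), IsCompact (⋃ i ∈ s, K i) := fun s =>
    s.isCompact_biUnion fun i _ => hc i
  have hb1 : ∀ s : Finset (Fin n), ∑ i ∈ s, t i ≤ M := by
    intro s
    have := lam_le hM (hcU s)
    rw [← hsum s] at this
    exact EReal.coe_le_coe_iff.mp this
  have hb2 : ∀ s : Finset (Fin n), -M ≤ ∑ i ∈ s, t i := by
    intro s
    have h1 : -(lam (⋃ i ∈ s, K i)) ≤ (M : EReal) := (le_max_right _ _).trans (hM _ (hcU s))
    have h2 : ((-M : ℝ) : EReal) ≤ lam (⋃ i ∈ s, K i) := by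
      rw [EReal.coe_neg]
      exact EReal.neg_le.mp h1
    rw [← hsum s] at h2
    exact EReal.coe_le_coe_iff.mp h2
  have hterm : ∀ i : Fin n, max (lam (K i)) (-(lam (K i))) = ((|t i| : ℝ) : EReal) := by
    intro i
    obtain ⟨r, hr⟩ : ∃ r : ℝ, lam (K i) = (r : EReal) := ⟨_, lam_coe hM (hc i)⟩
    rw [ht]
    simp only [hr, EReal.toReal_coe]
    exact emax_abs r
  calc ∑ i, max (lam (K i)) (-(lam (K i))) = ((∑ i, |t i| : ℝ) : EReal) := by
        rw [ecoe_sum]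
        exact Finset.sum_congr rfl fun i _ => hterm i
    _ ≤ ((2 * M : ℝ) : EReal) := by
        rw [EReal.coe_le_coe_iff]
        have hsplit := Finset.sum_filter_add_sum_filter_not Finset.univ
          (fun i => 0 ≤ t i) (fun i => |t i|)
        set S := Finset.univ.filter (fun i => 0 ≤ t i) with hS
        set S' := Finset.univ.filter (fun i => ¬ 0 ≤ t i) with hS'
        have e1 : ∑ i ∈ S, |t i| = ∑ i ∈ S, t i :=
          Finset.sum_congr rfl fun i hi => abs_of_nonneg (Finset.mem_filter.mp hi).2
        have e2 : ∑ i ∈ S', |t i| = -∑ i ∈ S', t i := by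
          rw [← Finset.sum_neg_distrib]
          exact Finset.sum_congr rfl fun i hi =>
            abs_of_neg (lt_of_not_ge (Finset.mem_filter.mp hi).2)
        have b1 := hb1 S
        have b2 := hb2 S'
        rw [← hsplit, e1, e2]
        linarith

private lemma tVO_le_2M
    (hadd : ∀ C K : Set X, IsCompact C → IsCompact K → Disjoint C K →
      lam (C ∪ K) = lam C + lam K)
    (hM : ∀ K : Set X, IsCompact K → max (lam K) (-(lam K)) ≤ (M : EReal))
    (U : Set X) : totVarOpen lam U ≤ ((2 * M : ℝ) : EReal) :=
  iSup_le fun n => iSup_le fun K => iSup_le fun h =>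
    sum_abs_le hadd hM K (fun i => (h.1 i).1) h.2

private lemma tVO_nonneg (U : Set X) : 0 ≤ totVarOpen lam U := by
  have h0 : (0 : EReal) = ∑ i : Fin 0, max (lam ((fun j : Fin 0 => j.elim0) i))
      (-(lam ((fun j : Fin 0 => j.elim0) i))) := by simp
  refine h0.le.trans ?_
  exact le_iSup₂_of_le 0 (fun j : Fin 0 => j.elim0)
    (le_iSup_of_le ⟨fun i => i.elim0, fun i => i.elim0⟩ le_rfl)

private lemma tVO_mono {U V : Set X} (h : U ⊆ V) : totVarOpen lam U ≤ totVarOpen lam V :=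
  iSup_le fun n => iSup_le fun K => iSup_le fun hK =>
    le_iSup₂_of_le n K (le_iSup_of_le
      ⟨fun i => ⟨(hK.1 i).1, (hK.1 i).2.trans h⟩, hK.2⟩ le_rfl)

private lemma totVar_eq_iInf (A : Set X) :
    totVar lam A = ⨅ (U : Set X) (_ : IsOpen U ∧ A ⊆ U), totVarOpen lam U := by
  unfold totVar
  split_ifs with h
  · refine le_antisymm (le_iInf₂ fun U hU => tVO_mono hU.2) (iInf₂_le A ⟨h, subset_rfl⟩)
  · rfl

private lemma totVar_open {U : Set X} (h : IsOpen U) : totVar lam U = totVarOpen lam U :=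
  if_pos h

private lemma totVar_le_2M
    (hadd : ∀ C K : Set X, IsCompact C → IsCompact K → Disjoint C K →
      lam (C ∪ K) = lam C + lam K)
    (hM : ∀ K : Set X, IsCompact K → max (lam K) (-(lam K)) ≤ (M : EReal))
    (A : Set X) : totVar lam A ≤ ((2 * M : ℝ) : EReal) := by
  rw [totVar_eq_iInf]
  exact iInf₂_le_of_le univ ⟨isOpen_univ, subset_univ A⟩ (tVO_le_2M hadd hM univ)

private lemma totVar_nonneg (A : Set X) : 0 ≤ totVar lam A := by
  rw [totVar_eq_iInf]
  exact le_iInf₂ fun U _ => tVO_nonneg U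

private lemma totVar_ne_bot (A : Set X) : totVar lam A ≠ ⊥ := by
  intro h
  have := totVar_nonneg (lam := lam) A
  rw [h] at this
  simp at this

private lemma emax_add_le {a b : EReal} (ha : a ≠ ⊤) (ha' : a ≠ ⊥) (hb : b ≠ ⊤) (hb' : b ≠ ⊥) :
    max (a + b) (-(a + b)) ≤ max a (-a) + max b (-b) := by
  obtain ⟨r, rfl⟩ : ∃ r : ℝ, a = (r : EReal) := ⟨_, (EReal.coe_toReal ha ha').symm⟩
  obtain ⟨s, rfl⟩ : ∃ s : ℝ, b = (s : EReal) := ⟨_, (EReal.coe_toReal hb hb').symm⟩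
  rw [← EReal.coe_add, emax_abs, emax_abs, emax_abs, ← EReal.coe_add, EReal.coe_le_coe_iff]
  exact abs_add_le r s

private lemma tVO_union_le
    (hadd : ∀ C K : Set X, IsCompact C → IsCompact K → Disjoint C K →
      lam (C ∪ K) = lam C + lam K)
    (hM : ∀ K : Set X, IsCompact K → max (lam K) (-(lam K)) ≤ (M : EReal))
    {V₁ V₂ : Set X} (hV₁ : IsOpen V₁) (hV₂ : IsOpen V₂) (hd : Disjoint V₁ V₂) :
    totVarOpen lam (V₁ ∪ V₂) ≤ totVarOpen lam V₁ + totVarOpen lam V₂ := by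
  refine iSup_le fun n => iSup_le fun K => iSup_le fun hK => ?_
  have hsplit := fun i => split_compact (hK.1 i).1 hV₁ hV₂ (hK.1 i).2 hd
  have hpt : ∀ i, max (lam (K i)) (-(lam (K i))) ≤
      max (lam (K i \ V₂)) (-(lam (K i \ V₂))) + max (lam (K i \ V₁)) (-(lam (K i \ V₁))) := by
    intro i
    obtain ⟨h1, h2, hc1, hc2, hdis, hun⟩ := hsplit i
    have heq := hadd _ _ hc1 hc2 hdis
    rw [hun] at heq
    rw [heq]
    exact emax_add_le (lam_ne_top hM hc1) (lam_ne_bot hM hc1)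
      (lam_ne_top hM hc2) (lam_ne_bot hM hc2)
  calc ∑ i, max (lam (K i)) (-(lam (K i)))
      ≤ ∑ i, (max (lam (K i \ V₂)) (-(lam (K i \ V₂))) +
          max (lam (K i \ V₁)) (-(lam (K i \ V₁)))) := Finset.sum_le_sum fun i _ => hpt i
    _ = (∑ i, max (lam (K i \ V₂)) (-(lam (K i \ V₂)))) +
          ∑ i, max (lam (K i \ V₁)) (-(lam (K i \ V₁))) := Finset.sum_add_distrib
    _ ≤ totVarOpen lam V₁ + totVarOpen lam V₂ := by
        refine add_le_add ?_ ?_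
        · exact le_iSup₂_of_le n (fun i => K i \ V₂) (le_iSup_of_le
            ⟨fun i => ⟨(hsplit i).2.2.1, (hsplit i).1⟩,
              fun i j hij => (hK.2 hij).mono diff_subset diff_subset⟩ le_rfl)
        · exact le_iSup₂_of_le n (fun i => K i \ V₁) (le_iSup_of_le
            ⟨fun i => ⟨(hsplit i).2.2.2.1, (hsplit i).2.1⟩,
              fun i j hij => (hK.2 hij).mono diff_subset diff_subset⟩ le_rfl)

private lemma tVO_superadd
    {U₁ U₂ U : Set X} (h1 : U₁ ⊆ U) (h2 : U₂ ⊆ U) (hd : Disjoint U₁ U₂) :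
    totVarOpen lam U₁ + totVarOpen lam U₂ ≤ totVarOpen lam U := by
  refine EReal.add_le_of_forall_lt fun a' ha' b' hb' => ?_
  unfold totVarOpen at ha' hb'
  simp only [lt_iSup_iff] at ha' hb'
  obtain ⟨n, K, hK, ha'⟩ := ha'
  obtain ⟨m, L, hL, hb'⟩ := hb'
  have hconds : ∀ i : Fin (n + m), IsCompact (Fin.append K L i) ∧ Fin.append K L i ⊆ U := by
    refine Fin.addCases (fun i => ?_) (fun i => ?_)
    · rw [Fin.append_left]
      exact ⟨(hK.1 i).1, (hK.1 i).2.trans h1⟩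
    · rw [Fin.append_right]
      exact ⟨(hL.1 i).1, (hL.1 i).2.trans h2⟩
  have hpw : Pairwise (Function.onFun Disjoint (Fin.append K L)) := by
    intro i j hij
    unfold Function.onFun
    induction i using Fin.addCases with
    | left i =>
      induction j using Fin.addCases with
      | left j =>
        rw [Fin.append_left, Fin.append_left]
        exact hK.2 fun h => hij (congrArg _ h)
      | right j =>
        rw [Fin.append_left, Fin.append_right]
        exact disjoint_of_subset (hK.1 i).2 (hL.1 j).2 hd
    | right i =>
      induction j using Fin.addCases with
      | left j =>
        rw [Fin.append_right, Fin.append_left]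
        exact disjoint_of_subset (hL.1 i).2 (hK.1 j).2 hd.symm
      | right j =>
        rw [Fin.append_right, Fin.append_right]
        exact hL.2 fun h => hij (congrArg _ h)
  have hsum : ∑ i : Fin (n + m), max (lam (Fin.append K L i)) (-(lam (Fin.append K L i))) =
      (∑ i : Fin n, max (lam (K i)) (-(lam (K i)))) +
        ∑ i : Fin m, max (lam (L i)) (-(lam (L i))) := by
    rw [Fin.sum_univ_add]
    simp only [Fin.append_left, Fin.append_right]
  calc a' + b' ≤ (∑ i : Fin n, max (lam (K i)) (-(lam (K i)))) +
        ∑ i : Fin m, max (lam (L i)) (-(lam (L i))) := add_le_add ha'.le hb'.le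
    _ = ∑ i : Fin (n + m), max (lam (Fin.append K L i)) (-(lam (Fin.append K L i))) := hsum.symm
    _ ≤ totVarOpen lam U :=
        le_iSup₂_of_le (n + m) (Fin.append K L) (le_iSup_of_le ⟨hconds, hpw⟩ le_rfl)

private lemma totVar_add [T2Space X]
    (hadd : ∀ C K : Set X, IsCompact C → IsCompact K → Disjoint C K →
      lam (C ∪ K) = lam C + lam K)
    (hM : ∀ K : Set X, IsCompact K → max (lam K) (-(lam K)) ≤ (M : EReal))
    {C K : Set X} (hC : IsCompact C) (hK : IsCompact K) (hd : Disjoint C K) :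
    totVar lam (C ∪ K) = totVar lam C + totVar lam K := by
  obtain ⟨V₁, V₂, hV₁, hV₂, hCV, hKV, hVd⟩ := SeparatedNhds.of_isCompact_isCompact hC hK hd
  refine le_antisymm ?_ ?_
  · refine EReal.le_add_of_forall_gt
      (Or.inl (totVar_ne_bot C))
      (Or.inl (ne_top_of_le_ne_top (EReal.coe_ne_top _) (totVar_le_2M hadd hM C)))
      fun a' ha' b' hb' => ?_
    rw [totVar_eq_iInf C] at ha'
    rw [totVar_eq_iInf K] at hb'
    simp only [gt_iff_lt, iInf_lt_iff] at ha' hb'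
    obtain ⟨U₁, hU₁, ha'⟩ := ha'
    obtain ⟨U₂, hU₂, hb'⟩ := hb'
    have hopen : IsOpen ((U₁ ∩ V₁) ∪ (U₂ ∩ V₂)) :=
      ((hU₁.1.inter hV₁).union (hU₂.1.inter hV₂))
    have hsub : C ∪ K ⊆ (U₁ ∩ V₁) ∪ (U₂ ∩ V₂) :=
      union_subset_union (subset_inter hU₁.2 hCV) (subset_inter hU₂.2 hKV)
    calc totVar lam (C ∪ K) ≤ totVarOpen lam ((U₁ ∩ V₁) ∪ (U₂ ∩ V₂)) := by
          rw [totVar_eq_iInf]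
          exact iInf₂_le _ ⟨hopen, hsub⟩
      _ ≤ totVarOpen lam (U₁ ∩ V₁) + totVarOpen lam (U₂ ∩ V₂) :=
          tVO_union_le hadd hM (hU₁.1.inter hV₁) (hU₂.1.inter hV₂)
            (hVd.mono inter_subset_right inter_subset_right)
      _ ≤ a' + b' := add_le_add ((tVO_mono inter_subset_left).trans ha'.le)
            ((tVO_mono inter_subset_left).trans hb'.le)
  · rw [totVar_eq_iInf (C ∪ K)]
    refine le_iInf₂ fun U hU => ?_
    calc totVar lam C + totVar lam K
        ≤ totVarOpen lam (U ∩ V₁) + totVarOpen lam (U ∩ V₂) := by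
          refine add_le_add ?_ ?_
          · rw [totVar_eq_iInf]
            exact iInf₂_le _ ⟨hU.1.inter hV₁, subset_inter ((subset_union_left).trans hU.2) hCV⟩
          · rw [totVar_eq_iInf]
            exact iInf₂_le _ ⟨hU.1.inter hV₂, subset_inter ((subset_union_right).trans hU.2) hKV⟩
      _ ≤ totVarOpen lam U :=
          tVO_superadd inter_subset_left inter_subset_left
            (hVd.mono inter_subset_right inter_subset_right)

private lemma totVar_inner {U : Set X} (hU : IsOpen U) :
    totVar lam U = ⨆ (K : Set X) (_ : IsCompact K ∧ K ⊆ U), totVar lam K := by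
  rw [totVar_open hU]
  refine le_antisymm ?_ ?_
  · refine iSup_le fun n => iSup_le fun K => iSup_le fun hK => ?_
    have hcU : IsCompact (⋃ i, K i) := isCompact_iUnion fun i => (hK.1 i).1
    refine le_iSup₂_of_le (⋃ i, K i) ⟨hcU, iUnion_subset fun i => (hK.1 i).2⟩ ?_
    rw [totVar_eq_iInf]
    refine le_iInf₂ fun U' hU' => ?_
    exact le_iSup₂_of_le n K (le_iSup_of_le
      ⟨fun i => ⟨(hK.1 i).1, (subset_iUnion K i).trans hU'.2⟩, hK.2⟩ le_rfl)
  · refine iSup₂_le fun K hK => ?_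
    rw [totVar_eq_iInf]
    exact iInf₂_le_of_le U ⟨hU, hK.2⟩ le_rfl

private lemma totVar_outer {F : Set X} (_ : IsClosed F) :
    totVar lam F = ⨅ (U : Set X) (_ : IsOpen U ∧ F ⊆ U), totVar lam U := by
  rw [totVar_eq_iInf F]
  refine le_antisymm (le_iInf₂ fun U hU => ?_) (le_iInf₂ fun U hU => ?_)
  · exact iInf₂_le_of_le U hU (totVar_open hU.1).ge
  · exact iInf₂_le_of_le U hU (totVar_open hU.1).le

private lemma totVar_isDTME [T2Space X]
    (hadd : ∀ C K : Set X, IsCompact C → IsCompact K → Disjoint C K →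
      lam (C ∪ K) = lam C + lam K)
    (hM : ∀ K : Set X, IsCompact K → max (lam K) (-(lam K)) ≤ (M : EReal)) :
    IsDTME (totVar lam) :=
  ⟨fun A _ => totVar_nonneg A,
   ⟨univ, Or.inl isOpen_univ,
     ne_top_of_le_ne_top (EReal.coe_ne_top _) (totVar_le_2M hadd hM univ)⟩,
   fun _ _ hC hK hd => totVar_add hadd hM hC hK hd,
   fun _ hU => totVar_inner hU,
   fun _ hF => totVar_outer hF⟩

end Aux

/-- Proposition 2.4 (III): if `sup{|λ(K)| : K compact} ≤ M < ∞`, then `λ⁺`, `λ⁻` and `|λ|`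
are real-valued (finite on open and closed sets) deficient topological measures with
`λ⁺(X) ≤ M`, `λ⁻(X) ≤ M` and `|λ|(X) ≤ 2M`. -/
theorem posVar_negVar_totVar_bounded
    [TopologicalSpace X] [LocallyCompactSpace X] [T2Space X]
    (lam : Set X → EReal)
    (hadd : ∀ C K : Set X, IsCompact C → IsCompact K → Disjoint C K →
      lam (C ∪ K) = lam C + lam K)
    (hne : ∃ K : Set X, IsCompact K ∧ lam K ≠ ⊤ ∧ lam K ≠ ⊥)
    (M : ℝ)
    (hM : ∀ K : Set X, IsCompact K → max (lam K) (-(lam K)) ≤ (M : EReal)) :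
    IsDTME (posVar lam) ∧ IsDTME (negVar lam) ∧ IsDTME (totVar lam) ∧
    (∀ A : Set X, IsOpen A ∨ IsClosed A →
      posVar lam A ≠ ⊤ ∧ negVar lam A ≠ ⊤ ∧ totVar lam A ≠ ⊤) ∧
    posVar lam (univ : Set X) ≤ (M : EReal) ∧
    negVar lam (univ : Set X) ≤ (M : EReal) ∧
    totVar lam (univ : Set X) ≤ ((2 * M : ℝ) : EReal) := by
  have hadd' : ∀ C K : Set X, IsCompact C → IsCompact K → Disjoint C K →
      (fun K => -(lam K)) (C ∪ K) = (fun K => -(lam K)) C + (fun K => -(lam K)) K := by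
    intro C K hC hK hd
    simp only
    rw [hadd C K hC hK hd,
      EReal.neg_add (Or.inl (lam_ne_bot hM hC)) (Or.inl (lam_ne_top hM hC)), sub_eq_add_neg]
  have hM' : ∀ K : Set X, IsCompact K →
      max ((fun K => -(lam K)) K) (-((fun K => -(lam K)) K)) ≤ (M : EReal) := by
    intro K hK
    simp only [neg_neg, max_comm]
    exact hM K hK
  refine ⟨posVar_isDTME hadd hM,
    posVar_isDTME (lam := fun K => -(lam K)) hadd' hM',
    totVar_isDTME hadd hM, ?_,
    posVar_le_M hM univ,
    posVar_le_M (lam := fun K => -(lam K)) hM' univ,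
    totVar_le_2M hadd hM univ⟩
  intro A _
  exact ⟨ne_top_of_le_ne_top (EReal.coe_ne_top M) (posVar_le_M hM A),
    ne_top_of_le_ne_top (EReal.coe_ne_top M)
      (posVar_le_M (lam := fun K => -(lam K)) hM' A),
    ne_top_of_le_ne_top (EReal.coe_ne_top _) (totVar_le_2M hadd hM A)⟩
end

section
/- Let X be a locally compact Hausdorff space and let ν be a deficient topological measure on X. Then ν coincides with its own positive variation and total variation: ν(A) = ν⁺(A) = |ν|(A) for every open or closed set A (where ν⁺ and |ν| are computed from the restriction of ν to compact sets). Moreover, ν is monotone, finitely additive on disjoint open sets, and superadditive: if (A_t)_{t∈T} is a pairwise disjoint family of open or closed sets with at most one of the closed sets among them not compact, and ⊔_{t∈T} A_t ⊆ A with A open or closed, then ν(A) ≥ Σ_{t∈T} ν(A_t). -/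
open Set Classical
open scoped ENNReal NNReal

variable {X : Type*}

/-- A deficient topological measure on a locally compact space `X`: a set function on open
and closed subsets of `X` with values in `[0,∞]`, not identically `∞`, finitely additive on
compact sets, inner compact regular on open sets, and outer regular on closed sets.
(Values on sets that are neither open nor closed are irrelevant.) -/
def IsDTM [TopologicalSpace X] (ν : Set X → ℝ≥0∞) : Prop :=
  (∃ A : Set X, (IsOpen A ∨ IsClosed A) ∧ ν A ≠ ⊤) ∧
  (∀ C K : Set X, IsCompact C → IsCompact K → Disjoint C K → ν (C ∪ K) = ν C + ν K) ∧
  (∀ U : Set X, IsOpen U → ν U = ⨆ (K : Set X) (_ : IsCompact K ∧ K ⊆ U), ν K) ∧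
  (∀ F : Set X, IsClosed F → ν F = ⨅ (U : Set X) (_ : IsOpen U ∧ F ⊆ U), ν U)

/-!
Everything reduces to one inequality: if `W` is open and contains disjoint sets `A₁, …, Aₙ`,
each compact or open, and a further closed set `F` disjoint from them, then
`ν A₁ + ⋯ + ν Aₙ + ν F ≤ ν W`. Inner regularity lets one replace an open `Aᵢ` by a compact
subset, and a compact `K` can be absorbed into the closed set, since
`ν K + ν F ≤ ν (K ∪ F)`: separating `K` from `F` by a compact neighbourhood `L` of `K`
gives `ν K + ν F ≤ ν L + ν (W \ L) ≤ ν W`. Superadditivity and the equality `ν = |ν|` on open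
sets are instances of the inequality, and the remaining claims follow from inner and outer
regularity.
-/

theorem EReal.coe_ennreal_iSup {ι : Sort*} [Nonempty ι] (f : ι → ℝ≥0∞) :
    ((⨆ i, f i : ℝ≥0∞) : EReal) = ⨆ i, (f i : EReal) :=
  Monotone.map_ciSup_of_continuousAt continuous_coe_ennreal_ereal.continuousAt
    EReal.coe_ennreal_strictMono.monotone

theorem EReal.coe_ennreal_iInf {ι : Sort*} (f : ι → ℝ≥0∞) :
    ((⨅ i, f i : ℝ≥0∞) : EReal) = ⨅ i, (f i : EReal) :=
  Monotone.map_iInf_of_continuousAt continuous_coe_ennreal_ereal.continuousAt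
    EReal.coe_ennreal_strictMono.monotone EReal.coe_ennreal_top

theorem EReal.coe_ennreal_finsetSum {ι : Type*} (s : Finset ι) (f : ι → ℝ≥0∞) :
    ((∑ i ∈ s, f i : ℝ≥0∞) : EReal) = ∑ i ∈ s, (f i : EReal) :=
  map_sum (⟨⟨(↑), EReal.coe_ennreal_zero⟩, EReal.coe_ennreal_add⟩ : ℝ≥0∞ →+ EReal) f s

theorem EReal.max_coe_ennreal_neg (x : ℝ≥0∞) : max (x : EReal) (-x) = x :=
  max_eq_left ((EReal.neg_le_neg_iff.2 (EReal.coe_ennreal_nonneg x)).trans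
    (by simpa using EReal.coe_ennreal_nonneg x))

section SetFunction

variable [TopologicalSpace X] {ν : Set X → ℝ≥0∞}
  (hadd : ∀ C K : Set X, IsCompact C → IsCompact K → Disjoint C K → ν (C ∪ K) = ν C + ν K)
  (hinner : ∀ U : Set X, IsOpen U → ν U = ⨆ (K : Set X) (_ : IsCompact K ∧ K ⊆ U), ν K)
  (houter : ∀ F : Set X, IsClosed F → ν F = ⨅ (U : Set X) (_ : IsOpen U ∧ F ⊆ U), ν U)

include hinner in
theorem le_of_isCompact_subset_isOpen {K U : Set X} (hK : IsCompact K) (hU : IsOpen U)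
    (hKU : K ⊆ U) : ν K ≤ ν U :=
  (hinner U hU).symm ▸ le_iSup₂ (f := fun K (_ : IsCompact K ∧ K ⊆ U) => ν K) K ⟨hK, hKU⟩

include houter in
theorem le_of_isClosed_subset {F B : Set X} (hF : IsClosed F) (hB : IsOpen B ∨ IsClosed B)
    (hFB : F ⊆ B) : ν F ≤ ν B := by
  have hopen : ∀ U, IsOpen U → F ⊆ U → ν F ≤ ν U := fun U hU hFU =>
    (houter F hF).symm ▸ iInf₂_le U ⟨hU, hFU⟩
  rcases hB with hB | hB
  · exact hopen B hB hFB
  · rw [houter B hB]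
    exact le_iInf₂ fun U hU => hopen U hU.1 (hFB.trans hU.2)

include hinner houter in
theorem le_of_subset [T2Space X] {A B : Set X} (hA : IsOpen A ∨ IsClosed A)
    (hB : IsOpen B ∨ IsClosed B) (hAB : A ⊆ B) : ν A ≤ ν B := by
  rcases hA with hA | hA
  · rw [hinner A hA]
    exact iSup₂_le fun K hK => le_of_isClosed_subset houter hK.1.isClosed hB (hK.2.trans hAB)
  · exact le_of_isClosed_subset houter hA hB hAB

include hinner houter in
theorem eq_iSup_of_isCompact_or_isOpen [T2Space X] {A : Set X}
    (hA : IsCompact A ∨ IsOpen A) : ν A = ⨆ (K : Set X) (_ : IsCompact K ∧ K ⊆ A), ν K := by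
  rcases hA with hA | hA
  · refine le_antisymm (le_iSup₂_of_le A ⟨hA, subset_rfl⟩ le_rfl) (iSup₂_le fun K hK => ?_)
    exact le_of_isClosed_subset houter hK.1.isClosed (Or.inr hA.isClosed) hK.2
  · exact hinner A hA

include hadd hinner in
theorem add_le_of_isCompact_of_isOpen {K V W : Set X} (hK : IsCompact K) (hV : IsOpen V)
    (hKV : Disjoint K V) (hW : IsOpen W) (hKW : K ⊆ W) (hVW : V ⊆ W) : ν K + ν V ≤ ν W := by
  rw [hinner V hV, ENNReal.add_biSup' ⟨∅, isCompact_empty, empty_subset V⟩]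
  refine iSup₂_le fun M hM => ?_
  rw [← hadd K M hK hM.1 (hKV.mono_right hM.2)]
  exact le_of_isCompact_subset_isOpen hinner (hK.union hM.1) hW
    (union_subset hKW (hM.2.trans hVW))

include hadd hinner houter in
theorem add_le_union_of_isCompact_of_isClosed [T2Space X] [LocallyCompactSpace X]
    {K F : Set X} (hK : IsCompact K) (hF : IsClosed F) (hKF : Disjoint K F) :
    ν K + ν F ≤ ν (K ∪ F) := by
  rw [houter _ (hK.isClosed.union hF)]
  refine le_iInf₂ fun W ⟨hW, hKFW⟩ => ?_
  obtain ⟨L, hL, hKL, hLWF⟩ := exists_compact_between hK (hW.sdiff hF)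
    (subset_sdiff.2 ⟨subset_union_left.trans hKFW, hKF⟩)
  obtain ⟨hLW, hLF⟩ := subset_sdiff.1 hLWF
  calc ν K + ν F
      ≤ ν L + ν (W \ L) := by
        gcongr
        · exact le_of_isClosed_subset houter hK.isClosed (Or.inr hL.isClosed)
            (hKL.trans interior_subset)
        · exact le_of_isClosed_subset houter hF (Or.inl (hW.sdiff hL.isClosed))
            (subset_sdiff.2 ⟨subset_union_right.trans hKFW, hLF.symm⟩)
    _ ≤ ν W := add_le_of_isCompact_of_isOpen hadd hinner hL (hW.sdiff hL.isClosed)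
        disjoint_sdiff_right hW hLW sdiff_subset

include hadd hinner houter in
theorem sum_add_le_of_pairwiseDisjoint [T2Space X] [LocallyCompactSpace X] {ι : Type*}
    (A : ι → Set X) (S : Finset ι) (hA : ∀ i ∈ S, IsCompact (A i) ∨ IsOpen (A i))
    (hdisj : (S : Set ι).PairwiseDisjoint A) {F W : Set X} (hF : IsClosed F)
    (hAF : ∀ i ∈ S, Disjoint (A i) F) (hW : IsOpen W) (hAW : ∀ i ∈ S, A i ⊆ W) (hFW : F ⊆ W) :
    ∑ i ∈ S, ν (A i) + ν F ≤ ν W := by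
  classical
  induction S using Finset.induction_on generalizing F with
  | empty => simpa using le_of_isClosed_subset houter hF (Or.inl hW) hFW
  | insert a s ha ih =>
    have hmem := Finset.mem_insert_self a s
    have hsub : ∀ i ∈ s, i ∈ insert a s := fun i => Finset.mem_insert_of_mem
    rw [Finset.sum_insert ha, add_comm (ν (A a)), add_assoc,
      eq_iSup_of_isCompact_or_isOpen hinner houter (hA a hmem),
      ENNReal.biSup_add' ⟨∅, isCompact_empty, empty_subset _⟩,
      ENNReal.add_biSup' ⟨∅, isCompact_empty, empty_subset _⟩]
    refine iSup₂_le fun K ⟨hK, hKA⟩ => ?_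
    calc ∑ i ∈ s, ν (A i) + (ν K + ν F)
        ≤ ∑ i ∈ s, ν (A i) + ν (K ∪ F) := by
          gcongr
          exact add_le_union_of_isCompact_of_isClosed hadd hinner houter hK hF
            ((hAF a hmem).mono_left hKA)
      _ ≤ ν W := ih (fun i hi => hA i (hsub i hi))
          (hdisj.subset (Finset.coe_subset.2 (Finset.subset_insert a s)))
          (hK.isClosed.union hF)
          (fun i hi => disjoint_union_right.2
            ⟨(hdisj (hsub i hi) hmem (ne_of_mem_of_not_mem hi ha)).mono_right hKA,
              hAF i (hsub i hi)⟩)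
          (fun i hi => hAW i (hsub i hi)) (union_subset (hKA.trans (hAW a hmem)) hFW)

include hadd hinner in
theorem union_eq_add_of_isOpen {U V : Set X} (hU : IsOpen U) (hV : IsOpen V)
    (hUV : Disjoint U V) : ν (U ∪ V) = ν U + ν V := by
  refine le_antisymm ?_ ?_
  · rw [hinner (U ∪ V) (hU.union hV)]
    refine iSup₂_le fun K ⟨hK, hKUV⟩ => ?_
    have hcover : K = (K \ V) ∪ (K \ U) := by
      rw [← sdiff_inter, hUV.symm.inter_eq, sdiff_empty]
    have hKVU : K \ V ⊆ U := fun x hx => (hKUV hx.1).resolve_right hx.2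
    have hKUV' : K \ U ⊆ V := fun x hx => (hKUV hx.1).resolve_left hx.2
    rw [hcover, hadd _ _ (hK.diff hV) (hK.diff hU) (hUV.mono hKVU hKUV')]
    gcongr
    · exact le_of_isCompact_subset_isOpen hinner (hK.diff hV) hU hKVU
    · exact le_of_isCompact_subset_isOpen hinner (hK.diff hU) hV hKUV'
  · rw [hinner U hU, ENNReal.biSup_add' ⟨∅, isCompact_empty, empty_subset U⟩]
    exact iSup₂_le fun K ⟨hK, hKU⟩ => add_le_of_isCompact_of_isOpen hadd hinner hK hV
      (hUV.mono_left hKU) (hU.union hV) (hKU.trans subset_union_left) subset_union_right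

include hadd hinner houter in
theorem tsum_le_of_iUnion_subset [T2Space X] [LocallyCompactSpace X] {ι : Type*}
    (A : ι → Set X) (B : Set X) (hA : ∀ i, IsOpen (A i) ∨ IsClosed (A i))
    (hdisj : Pairwise (Function.onFun Disjoint A))
    (hclosed : {i : ι | IsClosed (A i) ∧ ¬ IsCompact (A i)}.Subsingleton)
    (hB : IsOpen B ∨ IsClosed B) (hAB : (⋃ i, A i) ⊆ B) :
    ∑' i, ν (A i) ≤ ν B := by
  suffices hopen : ∀ W, IsOpen W → (⋃ i, A i) ⊆ W → ∑' i, ν (A i) ≤ ν W by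
    rcases hB with hB | hB
    · exact hopen B hB hAB
    · rw [houter B hB]
      exact le_iInf₂ fun W hW => hopen W hW.1 (hAB.trans hW.2)
  intro W hW hAW
  have hAW' : ∀ i, A i ⊆ W := fun i => (subset_iUnion A i).trans hAW
  rw [ENNReal.tsum_eq_iSup_sum]
  refine iSup_le fun S => ?_
  by_cases hbad : ∃ i₀ ∈ S, IsClosed (A i₀) ∧ ¬ IsCompact (A i₀)
  · obtain ⟨i₀, hi₀S, hi₀⟩ := hbad
    have hgood : ∀ i ∈ S.erase i₀, IsCompact (A i) ∨ IsOpen (A i) := fun i hi => by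
      by_contra! h
      exact Finset.ne_of_mem_erase hi (hclosed ⟨(hA i).resolve_left h.2, h.1⟩ hi₀)
    rw [← Finset.sum_erase_add S _ hi₀S]
    exact sum_add_le_of_pairwiseDisjoint hadd hinner houter A (S.erase i₀) hgood
      (hdisj.set_pairwise _) hi₀.1 (fun i hi => hdisj (Finset.ne_of_mem_erase hi)) hW
      (fun i _ => hAW' i) (hAW' i₀)
  · have hgood : ∀ i ∈ S, IsCompact (A i) ∨ IsOpen (A i) := fun i hi => by
      by_contra! h
      exact hbad ⟨i, hi, (hA i).resolve_left h.2, h.1⟩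
    exact le_self_add.trans (sum_add_le_of_pairwiseDisjoint hadd hinner houter A S hgood
      (hdisj.set_pairwise _) isClosed_empty (fun _ _ => disjoint_empty _) hW
      (fun i _ => hAW' i) (empty_subset W))

include hinner in
theorem coe_eq_posVarOpen {U : Set X} (hU : IsOpen U) :
    (ν U : EReal) = posVarOpen (fun K => (ν K : EReal)) U := by
  have : Nonempty {K : Set X // IsCompact K ∧ K ⊆ U} := ⟨⟨∅, isCompact_empty, empty_subset U⟩⟩
  rw [hinner U hU, iSup_subtype', EReal.coe_ennreal_iSup, posVarOpen, iSup_subtype']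

include hadd hinner houter in
theorem coe_eq_totVarOpen [T2Space X] [LocallyCompactSpace X] {U : Set X} (hU : IsOpen U) :
    (ν U : EReal) = totVarOpen (fun K => (ν K : EReal)) U := by
  refine le_antisymm ?_ ?_
  · rw [coe_eq_posVarOpen hinner hU]
    refine iSup₂_le fun K hK => le_iSup_of_le 1 (le_iSup_of_le (fun _ => K) (le_iSup_of_le
      ⟨fun _ => hK, fun i j hij => (hij (Subsingleton.elim i j)).elim⟩ ?_))
    simp [EReal.max_coe_ennreal_neg]
  · refine iSup_le fun n => iSup_le fun K => iSup_le fun hK => ?_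
    simp_rw [EReal.max_coe_ennreal_neg]
    rw [← EReal.coe_ennreal_finsetSum, EReal.coe_ennreal_le_coe_ennreal_iff]
    exact le_self_add.trans (sum_add_le_of_pairwiseDisjoint hadd hinner houter K Finset.univ
      (fun i _ => Or.inl (hK.1 i).1) (fun i _ j _ hij => hK.2 hij) isClosed_empty
      (fun _ _ => disjoint_empty _) hU (fun i _ => (hK.1 i).2) (empty_subset U))

include houter in
theorem coe_eq_ite_iInf {g : Set X → EReal} (hg : ∀ U, IsOpen U → (ν U : EReal) = g U)
    {A : Set X} (hA : IsOpen A ∨ IsClosed A) :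
    (ν A : EReal) = if IsOpen A then g A else ⨅ (U : Set X) (_ : IsOpen U ∧ A ⊆ U), g U := by
  split_ifs with hAo
  · exact hg A hAo
  · rw [houter A (hA.resolve_left hAo)]
    simp only [EReal.coe_ennreal_iInf]
    exact iInf_congr fun U => iInf_congr fun hU => hg U hU.1

end SetFunction

/-- Lemma 3.4: a deficient topological measure `ν` coincides with its own positive and total
variations (computed from the restriction of `ν` to compact sets), and moreover `ν` is
monotone, finitely additive on disjoint open sets, and superadditive. -/
theorem dtm_eq_posVar_eq_totVar
    [TopologicalSpace X] [LocallyCompactSpace X] [T2Space X]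
    (ν : Set X → ℝ≥0∞) (hν : IsDTM ν) :
    (∀ A : Set X, IsOpen A ∨ IsClosed A →
      (ν A : EReal) = posVar (fun K => ((ν K : EReal))) A ∧
      (ν A : EReal) = totVar (fun K => ((ν K : EReal))) A) ∧
    (∀ A B : Set X, (IsOpen A ∨ IsClosed A) → (IsOpen B ∨ IsClosed B) → A ⊆ B →
      ν A ≤ ν B) ∧
    (∀ U V : Set X, IsOpen U → IsOpen V → Disjoint U V → ν (U ∪ V) = ν U + ν V) ∧
    (∀ {T : Type} (A : T → Set X) (B : Set X),
      (∀ t, IsOpen (A t) ∨ IsClosed (A t)) →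
      Pairwise (Function.onFun Disjoint A) →
      {t : T | IsClosed (A t) ∧ ¬ IsCompact (A t)}.Subsingleton →
      (IsOpen B ∨ IsClosed B) → (⋃ t, A t) ⊆ B →
      ∑' t, ν (A t) ≤ ν B) := by
  obtain ⟨-, hadd, hinner, houter⟩ := hν
  refine ⟨fun A hA => ⟨?_, ?_⟩, fun A B => le_of_subset hinner houter,
    fun U V => union_eq_add_of_isOpen hadd hinner,
    tsum_le_of_iUnion_subset hadd hinner houter⟩
  · exact coe_eq_ite_iInf houter (fun U => coe_eq_posVarOpen hinner) hA
  · exact coe_eq_ite_iInf houter (fun U => coe_eq_totVarOpen hadd hinner houter) hA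
end

section
/- Let X be a locally compact Hausdorff space and let ν be a set function on the compact and open subsets of X with values in [0,∞] that is inner compact regular on open sets (ν(U) = sup{ν(C) : C ⊆ U, C compact} for every open U) and outer regular on closed sets (ν(F) = inf{ν(U) : F ⊆ U, U open} for every closed F). Then ν is finitely additive on compact sets (ν(C ⊔ K) = ν(C) + ν(K) for disjoint compact C, K) if and only if ν is finitely additive on open sets (ν(U ⊔ V) = ν(U) + ν(V) for disjoint open U, V). -/
open Set Classical
open scoped ENNReal NNReal

variable {X : Type*}

/-- Lemma 2.7 (iii): on a locally compact Hausdorff space, a `[0,∞]`-valued set function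
that is inner compact regular on open sets and outer regular on closed sets is finitely
additive on compact sets if and only if it is finitely additive on open sets. -/
theorem finAdd_compact_iff_finAdd_open
    [TopologicalSpace X] [LocallyCompactSpace X] [T2Space X]
    (ν : Set X → ℝ≥0∞)
    (hinner : ∀ U : Set X, IsOpen U →
      ν U = ⨆ (C : Set X) (_ : IsCompact C ∧ C ⊆ U), ν C)
    (houter : ∀ F : Set X, IsClosed F →
      ν F = ⨅ (U : Set X) (_ : IsOpen U ∧ F ⊆ U), ν U) :
    (∀ C K : Set X, IsCompact C → IsCompact K → Disjoint C K →
      ν (C ∪ K) = ν C + ν K) ↔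
    (∀ U V : Set X, IsOpen U → IsOpen V → Disjoint U V →
      ν (U ∪ V) = ν U + ν V) := by
  have mono : ∀ G H : Set X, IsOpen G → IsOpen H → G ⊆ H → ν G ≤ ν H := by
    intro G H hG hH hGH
    rw [hinner G hG, hinner H hH]
    exact iSup₂_le fun C hC => le_iSup₂_of_le C ⟨hC.1, hC.2.trans hGH⟩ le_rfl
  constructor
  · intro hadd U V hU hV hUV
    apply le_antisymm
    · rw [hinner (U ∪ V) (hU.union hV)]
      refine iSup₂_le fun K hKm => ?_
      obtain ⟨hK, hKsub⟩ := hKm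
      have h1 : K ∩ U = K \ V := by
        ext x
        simp only [mem_inter_iff, mem_diff]
        constructor
        · rintro ⟨hx, hxU⟩
          exact ⟨hx, fun hxV => hUV.ne_of_mem hxU hxV rfl⟩
        · rintro ⟨hx, hxV⟩
          exact ⟨hx, (hKsub hx).resolve_right hxV⟩
      have h2 : K ∩ V = K \ U := by
        ext x
        simp only [mem_inter_iff, mem_diff]
        constructor
        · rintro ⟨hx, hxV⟩
          exact ⟨hx, fun hxU => hUV.ne_of_mem hxU hxV rfl⟩
        · rintro ⟨hx, hxU⟩
          exact ⟨hx, (hKsub hx).resolve_left hxU⟩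
      have hcU : IsCompact (K ∩ U) := h1 ▸ hK.diff hV
      have hcV : IsCompact (K ∩ V) := h2 ▸ hK.diff hU
      have hKeq : K = (K ∩ U) ∪ (K ∩ V) := by
        rw [← inter_union_distrib_left, inter_eq_left.2 hKsub]
      have hd : Disjoint (K ∩ U) (K ∩ V) :=
        hUV.mono inter_subset_right inter_subset_right
      calc ν K = ν (K ∩ U) + ν (K ∩ V) := by nth_rewrite 1 [hKeq]; exact hadd _ _ hcU hcV hd
        _ ≤ ν U + ν V := by
            gcongr
            · rw [hinner U hU]
              exact le_iSup₂_of_le (K ∩ U) ⟨hcU, inter_subset_right⟩ le_rfl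
            · rw [hinner V hV]
              exact le_iSup₂_of_le (K ∩ V) ⟨hcV, inter_subset_right⟩ le_rfl
    · rw [hinner U hU, hinner V hV]
      refine ENNReal.biSup_add_biSup_le' (p := fun C => IsCompact C ∧ C ⊆ U)
        (q := fun K => IsCompact K ∧ K ⊆ V)
        ⟨∅, isCompact_empty, empty_subset _⟩ ⟨∅, isCompact_empty, empty_subset _⟩ ?_
      rintro C ⟨hC, hCU⟩ K ⟨hK, hKV⟩
      rw [← hadd C K hC hK (hUV.mono hCU hKV), hinner (U ∪ V) (hU.union hV)]
      exact le_iSup₂_of_le (C ∪ K) ⟨hC.union hK, union_subset_union hCU hKV⟩ le_rfl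
  · intro hadd C K hC hK hCK
    obtain ⟨U₀, V₀, hU₀, hV₀, hCU₀, hKV₀, hU₀V₀⟩ :=
      SeparatedNhds.of_isCompact_isCompact hC hK hCK
    apply le_antisymm
    · have key : ∀ U V : Set X, IsOpen U → C ⊆ U → IsOpen V → K ⊆ V →
          ν (C ∪ K) ≤ ν U + ν V := by
        intro U V hU hCU hV hKV
        have hd : Disjoint (U ∩ U₀) (V ∩ V₀) :=
          hU₀V₀.mono inter_subset_right inter_subset_right
        have hstep : ν (C ∪ K) ≤ ν ((U ∩ U₀) ∪ (V ∩ V₀)) := by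
          rw [houter (C ∪ K) (hC.union hK).isClosed]
          exact iInf₂_le ((U ∩ U₀) ∪ (V ∩ V₀))
            ⟨(hU.inter hU₀).union (hV.inter hV₀),
              union_subset_union (subset_inter hCU hCU₀) (subset_inter hKV hKV₀)⟩
        calc ν (C ∪ K) ≤ ν ((U ∩ U₀) ∪ (V ∩ V₀)) := hstep
          _ = ν (U ∩ U₀) + ν (V ∩ V₀) := hadd _ _ (hU.inter hU₀) (hV.inter hV₀) hd
          _ ≤ ν U + ν V := by
              gcongr
              · exact mono _ _ (hU.inter hU₀) hU inter_subset_left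
              · exact mono _ _ (hV.inter hV₀) hV inter_subset_left
      rw [houter C hC.isClosed, houter K hK.isClosed]
      simp_rw [ENNReal.iInf_add, ENNReal.add_iInf]
      exact le_iInf₂ fun U hU => le_iInf₂ fun V hV => key U V hU.1 hU.2 hV.1 hV.2
    · rw [houter (C ∪ K) (hC.union hK).isClosed]
      refine le_iInf₂ fun W hWm => ?_
      obtain ⟨hW, hsub⟩ := hWm
      have h1 : ν C ≤ ν (U₀ ∩ W) := by
        rw [houter C hC.isClosed]
        exact iInf₂_le (U₀ ∩ W)
          ⟨hU₀.inter hW, subset_inter hCU₀ (subset_union_left.trans hsub)⟩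
      have h2 : ν K ≤ ν (V₀ ∩ W) := by
        rw [houter K hK.isClosed]
        exact iInf₂_le (V₀ ∩ W)
          ⟨hV₀.inter hW, subset_inter hKV₀ (subset_union_right.trans hsub)⟩
      calc ν C + ν K ≤ ν (U₀ ∩ W) + ν (V₀ ∩ W) := add_le_add h1 h2
        _ = ν ((U₀ ∩ W) ∪ (V₀ ∩ W)) :=
            (hadd _ _ (hU₀.inter hW) (hV₀.inter hW)
              (hU₀V₀.mono inter_subset_left inter_subset_left)).symm
        _ ≤ ν W := mono _ _ ((hU₀.inter hW).union (hV₀.inter hW)) hW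
            (union_subset inter_subset_right inter_subset_right)
end

section
/- Let X be a locally compact Hausdorff space and let ν be a deficient topological measure on X. Given an open set U with ν(U) < ∞ and ε > 0, there exists a compact set C ⊆ U such that for every set E ⊆ U \ C that is compact or open, ν(E) < ε. -/
open Set Classical
open scoped ENNReal NNReal

variable {X : Type*}

/-- Lemma 2.9: for a deficient topological measure `ν` on a locally compact Hausdorff space,
given an open set `U` with `ν(U) < ∞` and `ε > 0`, there is a compact `C ⊆ U` such that
`ν(E) < ε` for every compact or open `E ⊆ U \ C`. -/
theorem dtm_small_outside_compact
    [TopologicalSpace X] [LocallyCompactSpace X] [T2Space X]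
    (ν : Set X → ℝ≥0∞) (hν : IsDTM ν)
    (U : Set X) (hU : IsOpen U) (hUfin : ν U < ⊤)
    (ε : ℝ≥0∞) (hε : 0 < ε) :
    ∃ C : Set X, IsCompact C ∧ C ⊆ U ∧
      ∀ E : Set X, (IsCompact E ∨ IsOpen E) → E ⊆ U \ C → ν E < ε := by
  obtain ⟨-, hadd, hsup, -⟩ := hν
  have hmono : ∀ K : Set X, IsCompact K → K ⊆ U → ν K ≤ ν U := by
    intro K hK hKU
    rw [hsup U hU]
    exact le_iSup₂ (f := fun (K : Set X) (_ : IsCompact K ∧ K ⊆ U) => ν K) K ⟨hK, hKU⟩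
  by_cases h0 : ν U = 0
  · refine ⟨∅, isCompact_empty, empty_subset U, ?_⟩
    intro E hE hEsub
    have hEU : E ⊆ U := hEsub.trans diff_subset
    rcases hE with hE | hE
    · exact lt_of_le_of_lt ((hmono E hE hEU).trans_eq h0) hε
    · have hle : ν E ≤ 0 := by
        rw [hsup E hE]
        exact iSup₂_le fun K hK => (hmono K hK.1 (hK.2.trans hEU)).trans_eq h0
      exact lt_of_le_of_lt hle hε
  · have hhalf : (0:ℝ≥0∞) < ε / 2 := ENNReal.half_pos hε.ne'
    have hlt : ν U - ε / 2 < ⨆ (K : Set X) (_ : IsCompact K ∧ K ⊆ U), ν K :=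
      (ENNReal.sub_lt_self hUfin.ne h0 hhalf.ne').trans_eq (hsup U hU)
    simp only [lt_iSup_iff] at hlt
    obtain ⟨C, ⟨hCc, hCU⟩, hC⟩ := hlt
    refine ⟨C, hCc, hCU, ?_⟩
    have hνC : ν C ≠ ⊤ := (lt_of_le_of_lt (hmono C hCc hCU) hUfin).ne
    have key : ∀ K : Set X, IsCompact K → K ⊆ U \ C → ν K < ε / 2 := by
      intro K hK hKsub
      have hdisj : Disjoint C K := (subset_diff.mp hKsub).2.symm
      have h1 : ν C + ν K ≤ ν U := by
        rw [← hadd C K hCc hK hdisj]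
        exact hmono (C ∪ K) (hCc.union hK) (union_subset hCU (hKsub.trans diff_subset))
      have h2 : ν U < ν C + ε / 2 :=
        ENNReal.lt_add_of_sub_lt_right (Or.inl hUfin.ne) hC
      exact (ENNReal.add_lt_add_iff_left hνC).mp (lt_of_le_of_lt h1 h2)
    intro E hE hEsub
    rcases eq_or_ne ε ⊤ with rfl | hεtop
    · rcases hE with hE | hE
      · exact lt_of_le_of_lt (hmono E hE (hEsub.trans diff_subset)) hUfin
      · have hle : ν E ≤ ν U := by
          rw [hsup E hE]
          exact iSup₂_le fun K hK => hmono K hK.1 (hK.2.trans (hEsub.trans diff_subset))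
        exact lt_of_le_of_lt hle hUfin
    · have hhl : ε / 2 < ε := ENNReal.half_lt_self hε.ne' hεtop
      rcases hE with hE | hE
      · exact lt_of_lt_of_le (key E hE hEsub) hhl.le
      · have hle : ν E ≤ ε / 2 := by
          rw [hsup E hE]
          exact iSup₂_le fun K hK => (key K hK.1 (hK.2.trans hEsub)).le
        exact lt_of_le_of_lt hle hhl
end

section
/- Let X be a locally compact Hausdorff space and let ν be a deficient topological measure on X. Then ν is τ-smooth on compact sets: if (K_α) is a decreasing net of compact sets with intersection the compact set K, then ν(K_α) converges to ν(K). Also, ν is τ-smooth on open sets: if (U_α) is an increasing net of open sets with union the open set U, then ν(U_α) converges to ν(U). -/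
open Set Classical
open scoped ENNReal NNReal

variable {X : Type*}

/-- Lemma 3.11: a deficient topological measure on a locally compact Hausdorff space is
τ-smooth on compact sets (if a net of compact sets decreases to the compact set `⋂ K_α`,
then `ν(K_α) → ν(⋂ K_α)`) and τ-smooth on open sets (if a net of open sets increases to the
open set `⋃ U_α`, then `ν(U_α) → ν(⋃ U_α)`). -/
theorem dtm_tau_smooth
    [TopologicalSpace X] [LocallyCompactSpace X] [T2Space X]
    (ν : Set X → ℝ≥0∞) (hν : IsDTM ν) :
    (∀ {ι : Type} [Preorder ι] [Nonempty ι] [IsDirected ι (· ≤ ·)] (K : ι → Set X),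
      (∀ a, IsCompact (K a)) → Antitone K →
      Filter.Tendsto (fun a => ν (K a)) Filter.atTop (nhds (ν (⋂ a, K a)))) ∧
    (∀ {ι : Type} [Preorder ι] [Nonempty ι] [IsDirected ι (· ≤ ·)] (U : ι → Set X),
      (∀ a, IsOpen (U a)) → Monotone U →
      Filter.Tendsto (fun a => ν (U a)) Filter.atTop (nhds (ν (⋃ a, U a)))) := by
  obtain ⟨-, -, hinner, houter⟩ := hν
  -- monotonicity on open sets
  have hoo : ∀ U V : Set X, IsOpen U → IsOpen V → U ⊆ V → ν U ≤ ν V := by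
    intro U V hU hV hUV
    rw [hinner U hU, hinner V hV]
    exact iSup_mono fun K => iSup_mono' fun ⟨hKc, hKU⟩ => ⟨⟨hKc, hKU.trans hUV⟩, le_rfl⟩
  -- monotonicity on closed sets
  have hcc : ∀ F G : Set X, IsClosed F → IsClosed G → F ⊆ G → ν F ≤ ν G := by
    intro F G hF hG hFG
    rw [houter F hF, houter G hG]
    exact iInf_mono fun U => iInf_mono' fun ⟨hUo, hGU⟩ => ⟨⟨hUo, hFG.trans hGU⟩, le_rfl⟩
  -- compact ≤ open containing it
  have hco : ∀ K U : Set X, IsCompact K → IsOpen U → K ⊆ U → ν K ≤ ν U := by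
    intro K U hK hU hKU
    rw [hinner U hU]
    exact le_iSup₂ (f := fun K (_ : IsCompact K ∧ K ⊆ U) => ν K) K ⟨hK, hKU⟩
  constructor
  · intro ι _ _ _ K hKc hKa
    have hdir : Directed (· ⊇ ·) K := by
      intro a b
      obtain ⟨c, hac, hbc⟩ := directed_of (· ≤ ·) a b
      exact ⟨c, hKa hac, hKa hbc⟩
    have key : ⨅ a, ν (K a) = ν (⋂ a, K a) := by
      refine le_antisymm ?_ (le_iInf fun a =>
        hcc _ _ (isClosed_iInter fun b => (hKc b).isClosed) (hKc a).isClosed (iInter_subset K a))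
      rw [houter _ (isClosed_iInter fun b => (hKc b).isClosed)]
      refine le_iInf₂ fun U ⟨hUo, hsub⟩ => ?_
      obtain ⟨a, ha⟩ := exists_subset_nhds_of_isCompact' hdir hKc
        (fun i => (hKc i).isClosed) (fun x hx => hUo.mem_nhds (hsub hx))
      exact (iInf_le _ a).trans (hco _ _ (hKc a) hUo ha)
    rw [← key]
    exact tendsto_atTop_iInf fun a b hab => hcc _ _ (hKc b).isClosed (hKc a).isClosed (hKa hab)
  · intro ι _ _ _ U hUo hUm
    have key : ⨆ a, ν (U a) = ν (⋃ a, U a) := by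
      refine le_antisymm (iSup_le fun a =>
        hoo _ _ (hUo a) (isOpen_iUnion hUo) (subset_iUnion U a)) ?_
      rw [hinner _ (isOpen_iUnion hUo)]
      refine iSup₂_le fun C ⟨hCc, hCsub⟩ => ?_
      obtain ⟨a, ha⟩ := hCc.elim_directed_cover U hUo hCsub hUm.directed_le
      exact (hco _ _ hCc (hUo a) ha).trans (le_iSup (fun a => ν (U a)) a)
    rw [← key]
    exact tendsto_atTop_iSup fun a b hab => hoo _ _ (hUo a) (hUo b) (hUm hab)
end

section
/- Let X be a compact Hausdorff space and let ν be a deficient topological measure on X. The following are equivalent: (a) ν is a topological measure; (b) ν(X) = ν(C) + ν(X \ C) for every closed set C; (c) ν(X) ≤ ν(C) + ν(X \ C) for every closed set C. -/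
open Set Classical
open scoped ENNReal NNReal

variable {X : Type*}

/-- A (real-valued) deficient topological measure on a compact space `X`: a set function on
open and closed subsets of `X` with values in `[0,∞)`, finitely additive on disjoint closed
sets, inner closed regular on open sets, and outer regular on closed sets. -/
def IsDTMc [TopologicalSpace X] (ν : Set X → ℝ≥0∞) : Prop :=
  (∀ A : Set X, IsOpen A ∨ IsClosed A → ν A ≠ ⊤) ∧
  (∀ C K : Set X, IsClosed C → IsClosed K → Disjoint C K → ν (C ∪ K) = ν C + ν K) ∧
  (∀ U : Set X, IsOpen U → ν U = ⨆ (C : Set X) (_ : IsClosed C ∧ C ⊆ U), ν C) ∧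
  (∀ F : Set X, IsClosed F → ν F = ⨅ (U : Set X) (_ : IsOpen U ∧ F ⊆ U), ν U)

/-- A (real-valued) topological measure on a compact space `X`: a set function on open and
closed subsets of `X` with values in `[0,∞)` that is additive on disjoint sets `A, B` whenever
`A`, `B` and `A ⊔ B` are each open or closed, inner closed regular on open sets, and outer
regular on closed sets. -/
def IsTMc [TopologicalSpace X] (μ : Set X → ℝ≥0∞) : Prop :=
  (∀ A : Set X, IsOpen A ∨ IsClosed A → μ A ≠ ⊤) ∧
  (∀ A B : Set X, (IsOpen A ∨ IsClosed A) → (IsOpen B ∨ IsClosed B) →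
    (IsOpen (A ∪ B) ∨ IsClosed (A ∪ B)) → Disjoint A B → μ (A ∪ B) = μ A + μ B) ∧
  (∀ U : Set X, IsOpen U → μ U = ⨆ (C : Set X) (_ : IsClosed C ∧ C ⊆ U), μ C) ∧
  (∀ F : Set X, IsClosed F → μ F = ⨅ (U : Set X) (_ : IsOpen U ∧ F ⊆ U), μ U)

section Aux

variable [TopologicalSpace X] {ν : Set X → ℝ≥0∞}

/-- A deficient topological measure is monotone on open/closed sets. -/
lemma IsDTMc.mono (hν : IsDTMc ν) {A B : Set X} (hA : IsOpen A ∨ IsClosed A)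
    (hB : IsOpen B ∨ IsClosed B) (hAB : A ⊆ B) : ν A ≤ ν B := by
  obtain ⟨hfin, hadd, hsupr, hinfr⟩ := hν
  have h1 : ∀ C U : Set X, IsClosed C → IsOpen U → C ⊆ U → ν C ≤ ν U := by
    intro C U hC hU hs
    rw [hsupr U hU]
    exact le_iSup₂_of_le C ⟨hC, hs⟩ le_rfl
  have h2 : ∀ F G : Set X, IsClosed F → IsClosed G → F ⊆ G → ν F ≤ ν G := by
    intro F G hF hG hs
    rw [hinfr G hG]
    exact le_iInf₂ fun U hU => h1 F U hF hU.1 (hs.trans hU.2)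
  rcases hA with hAo | hAc
  · rw [hsupr A hAo]
    refine iSup₂_le fun C hC => ?_
    rcases hB with hBo | hBc
    · exact h1 C B hC.1 hBo (hC.2.trans hAB)
    · exact h2 C B hC.1 hBc (hC.2.trans hAB)
  · rcases hB with hBo | hBc
    · exact h1 A B hAc hBo hAB
    · exact h2 A B hAc hBc hAB

/-- Reduce a bound on `ν U + a` for open `U` to closed subsets of `U`. -/
lemma IsDTMc.sup_add_le (hν : IsDTMc ν) {U : Set X} (hU : IsOpen U) {a t : ℝ≥0∞}
    (h : ∀ K : Set X, IsClosed K → K ⊆ U → ν K + a ≤ t) : ν U + a ≤ t := by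
  have ha : a ≤ t := le_trans le_add_self (h ∅ isClosed_empty (empty_subset U))
  rw [hν.2.2.1 U hU, ENNReal.iSup_add]
  refine iSup_le fun K => ?_
  by_cases hK : IsClosed K ∧ K ⊆ U
  · simpa [hK] using h K hK.1 hK.2
  · simpa [hK] using ha

/-- Superadditivity of a deficient topological measure. -/
lemma IsDTMc.superadd (hν : IsDTMc ν) {A B E : Set X} (hA : IsOpen A ∨ IsClosed A)
    (hB : IsOpen B ∨ IsClosed B) (hE : IsOpen E ∨ IsClosed E) (hd : Disjoint A B)
    (hs : A ∪ B ⊆ E) : ν A + ν B ≤ ν E := by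
  have hAE : A ⊆ E := (subset_union_left).trans hs
  have hBE : B ⊆ E := (subset_union_right).trans hs
  have base : ∀ C K : Set X, IsClosed C → IsClosed K → Disjoint C K → C ⊆ E → K ⊆ E →
      ν C + ν K ≤ ν E := by
    intro C K hC hK hdCK hCE hKE
    rw [← hν.2.1 C K hC hK hdCK]
    exact hν.mono (Or.inr (hC.union hK)) hE (union_subset hCE hKE)
  have stepB : ∀ C : Set X, IsClosed C → C ⊆ E → Disjoint C B → ν C + ν B ≤ ν E := by
    intro C hC hCE hdCB
    rcases hB with hBo | hBc
    · rw [add_comm]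
      refine hν.sup_add_le hBo fun K hK hKB => ?_
      rw [add_comm]
      exact base C K hC hK (hdCB.mono_right hKB) hCE (hKB.trans hBE)
    · exact base C B hC hBc hdCB hCE hBE
  rcases hA with hAo | hAc
  · refine hν.sup_add_le hAo fun C hC hCA => ?_
    exact stepB C hC (hCA.trans hAE) (hd.mono_left hCA)
  · exact stepB A hAc hAE hd

/-- A deficient topological measure is additive on disjoint open sets. -/
lemma IsDTMc.open_add (hν : IsDTMc ν) {A B : Set X} (hA : IsOpen A) (hB : IsOpen B)
    (hd : Disjoint A B) : ν (A ∪ B) = ν A + ν B := by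
  refine le_antisymm ?_ ?_
  · rw [hν.2.2.1 (A ∪ B) (hA.union hB)]
    refine iSup₂_le fun K hK => ?_
    obtain ⟨hKc, hKs⟩ := hK
    have hKA : K ∩ A = K ∩ Bᶜ := by
      apply Subset.antisymm
      · exact inter_subset_inter_right K fun x hx hxB => hd.ne_of_mem hx hxB rfl
      · intro x hx
        rcases hKs hx.1 with h | h
        · exact ⟨hx.1, h⟩
        · exact absurd h hx.2
    have hKB : K ∩ B = K ∩ Aᶜ := by
      apply Subset.antisymm
      · exact inter_subset_inter_right K fun x hx hxA => hd.ne_of_mem hxA hx rfl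
      · intro x hx
        rcases hKs hx.1 with h | h
        · exact absurd h hx.2
        · exact ⟨hx.1, h⟩
    have hKAc : IsClosed (K ∩ A) := hKA ▸ hKc.inter (isClosed_compl_iff.mpr hB)
    have hKBc : IsClosed (K ∩ B) := hKB ▸ hKc.inter (isClosed_compl_iff.mpr hA)
    have hKeq : K = (K ∩ A) ∪ (K ∩ B) := by
      rw [← inter_union_distrib_left, inter_eq_left.mpr hKs]
    calc ν K = ν (K ∩ A) + ν (K ∩ B) := by
          conv_lhs => rw [hKeq]
          exact hν.2.1 _ _ hKAc hKBc
            (hd.mono inter_subset_right inter_subset_right)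
      _ ≤ ν A + ν B := add_le_add
          (hν.mono (Or.inr hKAc) (Or.inl hA) inter_subset_right)
          (hν.mono (Or.inr hKBc) (Or.inl hB) inter_subset_right)
  · exact hν.superadd (Or.inl hA) (Or.inl hB) (Or.inl (hA.union hB)) hd Subset.rfl

/-- Under condition (b), a deficient topological measure is additive on a disjoint pair of
an open set and a closed set whose union is open or closed. -/
lemma IsDTMc.add_open_closed (hν : IsDTMc ν)
    (hb : ∀ C : Set X, IsClosed C → ν univ = ν C + ν Cᶜ) {A B : Set X}
    (hA : IsOpen A) (hB : IsClosed B) (hd : Disjoint A B)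
    (hE : IsOpen (A ∪ B) ∨ IsClosed (A ∪ B)) : ν (A ∪ B) = ν A + ν B := by
  rcases hE with hEo | hEc
  · -- union open: split the closed set Aᶜ = (A ∪ B)ᶜ ⊔ B
    have hunion : (A ∪ B)ᶜ ∪ B = Aᶜ := by
      ext x
      simp only [mem_union, mem_compl_iff, mem_union]
      constructor
      · rintro (h | h)
        · exact fun hx => h (Or.inl hx)
        · exact fun hx => hd.ne_of_mem hx h rfl
      · intro h
        by_cases hxB : x ∈ B
        · exact Or.inr hxB
        · exact Or.inl fun hx => hx.elim h hxB
    have hdis : Disjoint ((A ∪ B)ᶜ) B :=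
      disjoint_compl_left.mono_right subset_union_right
    have h1 : ν Aᶜ = ν ((A ∪ B)ᶜ) + ν B := by
      rw [← hunion]
      exact hν.2.1 _ _ hEo.isClosed_compl hB hdis
    have h2 := hb Aᶜ hA.isClosed_compl
    rw [compl_compl] at h2
    have h3 := hb ((A ∪ B)ᶜ) hEo.isClosed_compl
    rw [compl_compl] at h3
    have key : ν ((A ∪ B)ᶜ) + ν (A ∪ B) = ν ((A ∪ B)ᶜ) + (ν A + ν B) := by
      rw [← h3, h2, h1]; ring
    exact (ENNReal.add_right_inj (hν.1 _ (Or.inr hEo.isClosed_compl))).mp key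
  · -- union closed: split the open set Bᶜ = A ⊔ (A ∪ B)ᶜ
    have hunion : A ∪ (A ∪ B)ᶜ = Bᶜ := by
      ext x
      simp only [mem_union, mem_compl_iff, mem_union]
      constructor
      · rintro (h | h)
        · exact fun hx => hd.ne_of_mem h hx rfl
        · exact fun hx => h (Or.inr hx)
      · intro h
        by_cases hxA : x ∈ A
        · exact Or.inl hxA
        · exact Or.inr fun hx => hx.elim hxA h
    have hdis : Disjoint A ((A ∪ B)ᶜ) :=
      disjoint_compl_right.mono_left subset_union_left
    have h1 : ν Bᶜ = ν A + ν ((A ∪ B)ᶜ) := by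
      rw [← hunion]
      exact hν.open_add hA hEc.isOpen_compl hdis
    have h2 := hb B hB
    have h3 := hb (A ∪ B) hEc
    have key : ν (A ∪ B) + ν ((A ∪ B)ᶜ) = (ν A + ν B) + ν ((A ∪ B)ᶜ) := by
      rw [← h3, h2, h1]; ring
    have key' : ν ((A ∪ B)ᶜ) + ν (A ∪ B) = ν ((A ∪ B)ᶜ) + (ν A + ν B) := by
      rw [add_comm, key, add_comm]
    exact (ENNReal.add_right_inj (hν.1 _ (Or.inl hEc.isOpen_compl))).mp key'

end Aux

/-- Theorem 4.2 (I): for a deficient topological measure `ν` on a compact Hausdorff space,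
the following are equivalent: (a) `ν` is a topological measure;
(b) `ν(X) = ν(C) + ν(X \ C)` for every closed `C`;
(c) `ν(X) ≤ ν(C) + ν(X \ C)` for every closed `C`. -/
theorem dtm_is_tm_iff_compact
    [TopologicalSpace X] [CompactSpace X] [T2Space X]
    (ν : Set X → ℝ≥0∞) (hν : IsDTMc ν) :
    (IsTMc ν ↔ ∀ C : Set X, IsClosed C → ν univ = ν C + ν Cᶜ) ∧
    (IsTMc ν ↔ ∀ C : Set X, IsClosed C → ν univ ≤ ν C + ν Cᶜ) := by
  have hb_of_tm : IsTMc ν → ∀ C : Set X, IsClosed C → ν univ = ν C + ν Cᶜ := by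
    intro h C hC
    have := h.2.1 C Cᶜ (Or.inr hC) (Or.inl hC.isOpen_compl)
      (by rw [union_compl_self]; exact Or.inl isOpen_univ) disjoint_compl_right
    rwa [union_compl_self] at this
  have hb_of_c : (∀ C : Set X, IsClosed C → ν univ ≤ ν C + ν Cᶜ) →
      ∀ C : Set X, IsClosed C → ν univ = ν C + ν Cᶜ := by
    intro h C hC
    refine le_antisymm (h C hC) ?_
    exact hν.superadd (Or.inr hC) (Or.inl hC.isOpen_compl) (Or.inr isClosed_univ)
      disjoint_compl_right (by rw [union_compl_self])
  have htm_of_b : (∀ C : Set X, IsClosed C → ν univ = ν C + ν Cᶜ) → IsTMc ν := by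
    intro hb
    refine ⟨hν.1, ?_, hν.2.2.1, hν.2.2.2⟩
    intro A B hA hB hE hd
    rcases hA with hAo | hAc
    · rcases hB with hBo | hBc
      · exact hν.open_add hAo hBo hd
      · exact hν.add_open_closed hb hAo hBc hd hE
    · rcases hB with hBo | hBc
      · rw [union_comm] at hE ⊢
        rw [hν.add_open_closed hb hBo hAc hd.symm hE, add_comm]
      · exact hν.2.1 A B hAc hBc hd
  refine ⟨⟨hb_of_tm, htm_of_b⟩, ⟨fun h C hC => le_of_eq (hb_of_tm h C hC),
    fun h => htm_of_b (hb_of_c h)⟩⟩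
end

section
/- Let X be a locally compact Hausdorff space and let ν be a deficient topological measure on X. The following are equivalent: (a) ν is a topological measure; (b) ν(U) = ν(C) + ν(U \ C) for every compact C and open U with C ⊆ U; (c) ν(U) ≤ ν(C) + ν(U \ C) for every compact C and open U with C ⊆ U. -/
open Set Classical
open scoped ENNReal NNReal

variable {X : Type*}

/-- A topological measure on a locally compact space `X`: a set function on open and closed
subsets of `X` with values in `[0,∞]`, not identically `∞`, additive on disjoint sets `A, B`
whenever `A`, `B` and `A ⊔ B` each belong to the union of the collections of compact and open
sets, inner compact regular on open sets, and outer regular on closed sets. -/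
def IsTM [TopologicalSpace X] (μ : Set X → ℝ≥0∞) : Prop :=
  (∃ A : Set X, (IsOpen A ∨ IsClosed A) ∧ μ A ≠ ⊤) ∧
  (∀ A B : Set X, (IsCompact A ∨ IsOpen A) → (IsCompact B ∨ IsOpen B) →
    (IsCompact (A ∪ B) ∨ IsOpen (A ∪ B)) → Disjoint A B → μ (A ∪ B) = μ A + μ B) ∧
  (∀ U : Set X, IsOpen U → μ U = ⨆ (K : Set X) (_ : IsCompact K ∧ K ⊆ U), μ K) ∧
  (∀ F : Set X, IsClosed F → μ F = ⨅ (U : Set X) (_ : IsOpen U ∧ F ⊆ U), μ U)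

/-! A deficient topological measure is always superadditive on a compact set and a disjoint open
set, which turns (c) into (b). Given (b), disjoint open sets add by inner regularity, and for
compact `A`, open `B` with `A ∪ B` compact one splits an open `V = O ∪ B ⊇ A ∪ B`, where `O ⊇ A`
has `ν O < ∞`, in two ways: as `ν (A ∪ B) + ν r` and, splitting off `A` first, as
`ν A + ν B + ν r`, with `r = V \ (A ∪ B)`. Since `r ⊆ O`, `ν r` is finite and cancels. -/

namespace IsDTM

variable [TopologicalSpace X] {ν : Set X → ℝ≥0∞}

lemma mono_compact_open (hν : IsDTM ν) {K U : Set X} (hK : IsCompact K) (hU : IsOpen U)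
    (hKU : K ⊆ U) : ν K ≤ ν U := by
  rw [hν.2.2.1 U hU]
  exact le_iSup₂_of_le K ⟨hK, hKU⟩ le_rfl

lemma mono_open (hν : IsDTM ν) {V U : Set X} (hV : IsOpen V) (hU : IsOpen U) (hVU : V ⊆ U) :
    ν V ≤ ν U := by
  rw [hν.2.2.1 V hV]
  exact iSup₂_le fun K hK => hν.mono_compact_open hK.1 hU (hK.2.trans hVU)

lemma mono_compact [T2Space X] (hν : IsDTM ν) {K C : Set X} (hK : IsCompact K)
    (hC : IsCompact C) (hKC : K ⊆ C) : ν K ≤ ν C := by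
  rw [hν.2.2.2 C hC.isClosed]
  exact le_iInf₂ fun U hU => hν.mono_compact_open hK hU.1 (hKC.trans hU.2)

lemma add_le_of_forall_isCompact (hν : IsDTM ν) {V : Set X} (hV : IsOpen V) {a t : ℝ≥0∞}
    (h : ∀ K : Set X, IsCompact K → K ⊆ V → a + ν K ≤ t) : a + ν V ≤ t := by
  rw [hν.2.2.1 V hV, ENNReal.add_biSup' ⟨∅, isCompact_empty, empty_subset V⟩]
  exact iSup₂_le fun K hK => h K hK.1 hK.2

lemma add_le_of_disjoint (hν : IsDTM ν) {C V W : Set X} (hC : IsCompact C) (hV : IsOpen V)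
    (hd : Disjoint C V) (hW : IsOpen W) (hCVW : C ∪ V ⊆ W) : ν C + ν V ≤ ν W :=
  hν.add_le_of_forall_isCompact hV fun K hK hKV => by
    rw [← hν.2.1 C K hC hK (hd.mono_right hKV)]
    exact hν.mono_compact_open (hC.union hK) hW ((union_subset_union_right C hKV).trans hCVW)

lemma add_sdiff_le [T2Space X] (hν : IsDTM ν) {C U : Set X} (hC : IsCompact C)
    (hU : IsOpen U) (hCU : C ⊆ U) : ν C + ν (U \ C) ≤ ν U :=
  hν.add_le_of_disjoint hC (hU.sdiff hC.isClosed) disjoint_sdiff_right hU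
    (union_sdiff_cancel hCU).le

lemma union_open (hν : IsDTM ν) {U₁ U₂ : Set X} (hU₁ : IsOpen U₁) (hU₂ : IsOpen U₂)
    (hd : Disjoint U₁ U₂) : ν (U₁ ∪ U₂) = ν U₁ + ν U₂ := by
  refine le_antisymm ?_ ?_
  · rw [hν.2.2.1 _ (hU₁.union hU₂)]
    refine iSup₂_le fun K ⟨hK, hKU⟩ => ?_
    have hK_eq : K = (K \ U₂) ∪ (K \ U₁) := by
      ext x
      have := @hKU x
      have : x ∈ U₁ → x ∉ U₂ := fun h => disjoint_left.mp hd h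
      simp only [mem_union, mem_sdiff] at *
      tauto
    have hsdiff₁ : K \ U₂ ⊆ U₁ := fun x hx => (hKU hx.1).resolve_right hx.2
    have hsdiff₂ : K \ U₁ ⊆ U₂ := fun x hx => (hKU hx.1).resolve_left hx.2
    rw [hK_eq, hν.2.1 _ _ (hK.diff hU₂) (hK.diff hU₁) (hd.mono hsdiff₁ hsdiff₂)]
    exact add_le_add (hν.mono_compact_open (hK.diff hU₂) hU₁ hsdiff₁)
      (hν.mono_compact_open (hK.diff hU₁) hU₂ hsdiff₂)
  · rw [add_comm]
    refine hν.add_le_of_forall_isCompact hU₁ fun K hK hKU₁ => ?_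
    rw [add_comm]
    exact hν.add_le_of_disjoint hK hU₂ (hd.mono_left hKU₁) (hU₁.union hU₂)
      (union_subset_union_left U₂ hKU₁)

lemma eq_add_add_sdiff_of_split (hν : IsDTM ν)
    (hsplit : ∀ C U : Set X, IsCompact C → IsOpen U → C ⊆ U → ν U = ν C + ν (U \ C))
    {A B V : Set X} (hA : IsCompact A) (hB : IsOpen B) (hAB : IsClosed (A ∪ B))
    (hd : Disjoint A B) (hV : IsOpen V) (hABV : A ∪ B ⊆ V) :
    ν V = ν A + ν B + ν (V \ (A ∪ B)) := by
  have hVA : V \ A = B ∪ V \ (A ∪ B) := by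
    ext x
    have := @hABV x
    have : x ∈ A → x ∉ B := fun h => disjoint_left.mp hd h
    simp only [mem_union, mem_sdiff] at *
    tauto
  rw [hsplit A V hA hV (subset_union_left.trans hABV), hVA,
    hν.union_open hB (hV.sdiff hAB) (disjoint_sdiff_right.mono_left subset_union_right), add_assoc]

lemma union_eq_of_split [T2Space X] (hν : IsDTM ν)
    (hsplit : ∀ C U : Set X, IsCompact C → IsOpen U → C ⊆ U → ν U = ν C + ν (U \ C))
    {A B : Set X} (hA : IsCompact A) (hB : IsOpen B) (hAB : IsCompact (A ∪ B) ∨ IsOpen (A ∪ B))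
    (hd : Disjoint A B) : ν (A ∪ B) = ν A + ν B := by
  rcases hAB with hAB | hAB
  swap
  · rw [hsplit A _ hA hAB subset_union_left, union_sdiff_left, hd.symm.sdiff_eq_left]
  rcases eq_or_ne (ν A) ⊤ with hA_top | hA_fin
  · rw [hA_top, top_add, ← top_le_iff, ← hA_top]
    exact hν.mono_compact hA hAB subset_union_left
  obtain ⟨O, ⟨hO, hAO⟩, hO_fin⟩ : ∃ O : Set X, (IsOpen O ∧ A ⊆ O) ∧ ν O < ⊤ := by
    have := hA_fin.lt_top
    rw [hν.2.2.2 A hA.isClosed] at this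
    simpa only [iInf_lt_iff, exists_prop] using this
  have hV : IsOpen (O ∪ B) := hO.union hB
  have hABV : A ∪ B ⊆ O ∪ B := union_subset_union_left B hAO
  have hrest : ν ((O ∪ B) \ (A ∪ B)) ≠ ⊤ :=
    ((hν.mono_open (hV.sdiff hAB.isClosed) hO fun x hx =>
      hx.1.resolve_right fun hxB => hx.2 (Or.inr hxB)).trans_lt hO_fin).ne
  refine (ENNReal.add_left_inj hrest).mp ?_
  rw [← hsplit _ _ hAB hV hABV]
  exact hν.eq_add_add_sdiff_of_split hsplit hA hB hAB.isClosed hd hV hABV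

lemma isTM_of_split [T2Space X] (hν : IsDTM ν)
    (hsplit : ∀ C U : Set X, IsCompact C → IsOpen U → C ⊆ U → ν U = ν C + ν (U \ C)) :
    IsTM ν := by
  refine ⟨hν.1, ?_, hν.2.2.1, hν.2.2.2⟩
  rintro A B (hA | hA) (hB | hB) hAB hd
  · exact hν.2.1 A B hA hB hd
  · exact hν.union_eq_of_split hsplit hA hB hAB hd
  · rw [union_comm, add_comm]
    exact hν.union_eq_of_split hsplit hB hA (union_comm A B ▸ hAB) hd.symm
  · exact hν.union_open hA hB hd

end IsDTM

lemma IsTM.split [TopologicalSpace X] [T2Space X] {μ : Set X → ℝ≥0∞} (hμ : IsTM μ) {C U : Set X}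
    (hC : IsCompact C) (hU : IsOpen U) (hCU : C ⊆ U) : μ U = μ C + μ (U \ C) := by
  have h := hμ.2.1 C (U \ C) (Or.inl hC) (Or.inr (hU.sdiff hC.isClosed))
    (Or.inr ((union_sdiff_cancel hCU).symm ▸ hU)) disjoint_sdiff_right
  rwa [union_sdiff_cancel hCU] at h

theorem dtm_is_tm_iff_general
    [TopologicalSpace X] [T2Space X]
    (ν : Set X → ℝ≥0∞) (hν : IsDTM ν) :
    (IsTM ν ↔ ∀ C U : Set X, IsCompact C → IsOpen U → C ⊆ U →
      ν U = ν C + ν (U \ C)) ∧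
    (IsTM ν ↔ ∀ C U : Set X, IsCompact C → IsOpen U → C ⊆ U →
      ν U ≤ ν C + ν (U \ C)) := by
  have tm_iff_split := Iff.intro (fun h _ _ => h.split) hν.isTM_of_split
  refine ⟨tm_iff_split, tm_iff_split.trans ⟨fun h C U hC hU hCU => (h C U hC hU hCU).le, ?_⟩⟩
  exact fun h C U hC hU hCU => (h C U hC hU hCU).antisymm (hν.add_sdiff_le hC hU hCU)

/-- Theorem 4.2 (II): for a deficient topological measure `ν` on a locally compact Hausdorff
space, the following are equivalent: (a) `ν` is a topological measure;
(b) `ν(U) = ν(C) + ν(U \ C)` for every compact `C` and open `U` with `C ⊆ U`;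
(c) `ν(U) ≤ ν(C) + ν(U \ C)` for every compact `C` and open `U` with `C ⊆ U`. -/
theorem dtm_is_tm_iff
    [TopologicalSpace X] [LocallyCompactSpace X] [T2Space X]
    (ν : Set X → ℝ≥0∞) (hν : IsDTM ν) :
    (IsTM ν ↔ ∀ C U : Set X, IsCompact C → IsOpen U → C ⊆ U →
      ν U = ν C + ν (U \ C)) ∧
    (IsTM ν ↔ ∀ C U : Set X, IsCompact C → IsOpen U → C ⊆ U →
      ν U ≤ ν C + ν (U \ C)) :=
  dtm_is_tm_iff_general ν hν
end
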